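/- arXiv:1803.00040 — 11 statements merged into one kernel-verified Lean document; each statement's English description precedes it below -/
import Mathlib

section
/- Let z ≤ x̄₀ be real numbers and k > 0. If F ⊆ G is a family of functions that is equicontinuous on [0,∞), then the closure of F in the Banach space (C_k[0,∞), ‖·‖_k) is compact. -/
/-- Membership in `C_k[0,∞)`: continuous on `[0,∞)` with
`sup_{t ≥ 0} e^{-kt} |x t| < ∞`. -/
def memCk (k : ℝ) (x : ℝ → ℝ) : Prop :=
  ContinuousOn x (Set.Ici 0) ∧
    BddAbove ((fun t => Real.exp (-k * t) * |x t|) '' Set.Ici (0 : ℝ))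

/-- The weighted supremum norm `‖x‖_k = sup_{t ≥ 0} e^{-kt} |x t|`. -/
noncomputable def normk (k : ℝ) (x : ℝ → ℝ) : ℝ :=
  sSup ((fun t => Real.exp (-k * t) * |x t|) '' Set.Ici (0 : ℝ))

/-- If `F ⊆ G` is equicontinuous on `[0,∞)`, then the closure of `F` in
`(C_k[0,∞), ‖·‖_k)` is compact; equivalently (sequential compactness in a
metric space), every sequence in `F` has a subsequence converging in the
`‖·‖_k` norm to an element of `C_k[0,∞)`. -/
theorem closure_of_equicontinuous_family_compact (k z xbar0 : ℝ) (hk : 0 < k)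
    (hzx : z ≤ xbar0) (F : Set (ℝ → ℝ))
    (hFG : ∀ f ∈ F, ContinuousOn f (Set.Ici 0) ∧
      ∀ t ≥ (0 : ℝ), z ≤ f t ∧ f t ≤ xbar0)
    (hequi : ∀ ε > (0 : ℝ), ∀ t ≥ (0 : ℝ), ∃ δ > (0 : ℝ), ∀ f ∈ F,
      ∀ s ≥ (0 : ℝ), |s - t| < δ → |f s - f t| < ε) :
    ∀ f : ℕ → ℝ → ℝ, (∀ n, f n ∈ F) →
      ∃ φ : ℕ → ℕ, StrictMono φ ∧ ∃ l : ℝ → ℝ, memCk k l ∧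
        Filter.Tendsto (fun n => normk k (f (φ n) - l))
          Filter.atTop (nhds 0) := by
  intro f hf
  classical
  -- the domain `[0,∞)` as a subtype
  set X : Set ℝ := Set.Ici (0:ℝ) with hX
  have hce : Topology.IsClosedEmbedding ((↑) : X → ℝ) :=
    (isClosed_Ici).isClosedEmbedding_subtypeVal
  haveI : LocallyCompactSpace X := hce.locallyCompactSpace
  haveI : SigmaCompactSpace X := (isClosed_Ici).sigmaCompactSpace
  haveI : FirstCountableTopology C(X, ℝ) := UniformSpace.firstCountableTopology _
  -- choose moduli of equicontinuity
  have H : ∀ (q : ℕ) (x : X), ∃ δ > (0:ℝ), ∀ g ∈ F, ∀ s ≥ (0:ℝ),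
      |s - x.1| < δ → |g s - g x.1| < 1/(q+1) := fun q x =>
    hequi (1/(q+1)) (by positivity) x.1 x.2
  choose δ hδpos hδ using H
  -- global bound
  set M : ℝ := max |z| |xbar0| with hMdef
  have hM0 : 0 ≤ M := le_trans (abs_nonneg z) (le_max_left _ _)
  have hzM : ∀ v : ℝ, z ≤ v → v ≤ xbar0 → |v| ≤ M := by
    intro v h1 h2
    rw [abs_le]
    refine ⟨?_, h2.trans ((le_abs_self xbar0).trans (le_max_right _ _))⟩
    have h3 : -M ≤ -|z| := neg_le_neg (le_max_left _ _)
    exact h3.trans ((neg_abs_le z).trans h1)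
  -- the ambient set `A` of functions
  set A : Set (X → ℝ) := {v | (∀ x, v x ∈ Set.Icc z xbar0) ∧
      ∀ (q : ℕ) (x y : X), |y.1 - x.1| < δ q x → |v y - v x| ≤ 1/(q+1)} with hA
  have hAcont : ∀ v ∈ A, Continuous v := by
    intro v hv
    rw [Metric.continuous_iff]
    intro x ε hε
    obtain ⟨q, hq⟩ := exists_nat_one_div_lt hε
    refine ⟨δ q x, hδpos q x, fun y hy => ?_⟩
    have hy' : |y.1 - x.1| < δ q x := by
      rw [Subtype.dist_eq, Real.dist_eq] at hy; exact hy
    rw [Real.dist_eq]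
    exact lt_of_le_of_lt (hv.2 q x y hy') hq
  set S : Set C(X, ℝ) := {u | (⇑u) ∈ A} with hS
  -- `A` is compact in the product topology
  have hAclosed : IsClosed A := by
    have h1 : IsClosed {v : X → ℝ | ∀ x, v x ∈ Set.Icc z xbar0} := by
      have he : {v : X → ℝ | ∀ x, v x ∈ Set.Icc z xbar0}
          = ⋂ x, (fun v : X → ℝ => v x) ⁻¹' Set.Icc z xbar0 := by
        ext v; simp
      rw [he]
      exact isClosed_iInter fun x => isClosed_Icc.preimage (continuous_apply x)
    have h2 : IsClosed {v : X → ℝ | ∀ (q : ℕ) (x y : X),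
        |y.1 - x.1| < δ q x → |v y - v x| ≤ 1/(q+1)} := by
      have he : {v : X → ℝ | ∀ (q : ℕ) (x y : X),
          |y.1 - x.1| < δ q x → |v y - v x| ≤ 1/(q+1)}
          = ⋂ (q : ℕ), ⋂ (x : X), ⋂ (y : X),
            {v : X → ℝ | |y.1 - x.1| < δ q x → |v y - v x| ≤ 1/(q+1)} := by
        ext v; simp [Set.mem_iInter]
      rw [he]
      refine isClosed_iInter fun q => isClosed_iInter fun x => isClosed_iInter fun y => ?_
      by_cases h : |y.1 - x.1| < δ q x
      · have he2 : {v : X → ℝ | |y.1 - x.1| < δ q x → |v y - v x| ≤ 1/(q+1)}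
            = (fun v : X → ℝ => v y - v x) ⁻¹' Set.Icc (-(1/(q+1))) (1/(q+1)) := by
          ext v
          simp only [Set.mem_setOf_eq, Set.mem_preimage, Set.mem_Icc, ← abs_le]
          exact ⟨fun hi => hi h, fun hi _ => hi⟩
        rw [he2]
        exact isClosed_Icc.preimage ((continuous_apply y).sub (continuous_apply x))
      · have he2 : {v : X → ℝ | |y.1 - x.1| < δ q x → |v y - v x| ≤ 1/(q+1)}
            = Set.univ := by
          ext v
          simp only [Set.mem_setOf_eq, Set.mem_univ, iff_true]
          exact fun hc => absurd hc h
        rw [he2]; exact isClosed_univ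
    rw [hA, Set.setOf_and]
    exact h1.inter h2
  have hAcompact : IsCompact A := by
    have hsub : A ⊆ Set.pi Set.univ (fun _ : X => Set.Icc z xbar0) := by
      intro v hv x _; exact hv.1 x
    exact (isCompact_univ_pi fun _ => isCompact_Icc).of_isClosed_subset hAclosed hsub
  have himg : ContinuousMap.toFun '' S = A := by
    ext v
    constructor
    · rintro ⟨u, hu, rfl⟩; exact hu
    · intro hv; exact ⟨⟨v, hAcont v hv⟩, hv, rfl⟩
  have hS2 : Equicontinuous (fun u : S => ⇑(u : C(X, ℝ))) := by
    intro x
    rw [Metric.equicontinuousAt_iff]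
    intro ε hε
    obtain ⟨q, hq⟩ := exists_nat_one_div_lt hε
    refine ⟨δ q x, hδpos q x, fun y hy u => ?_⟩
    have hy' : |y.1 - x.1| < δ q x := by
      rw [Subtype.dist_eq, Real.dist_eq] at hy; exact hy
    have h2 := u.2.2 q x y hy'
    rw [Real.dist_eq]
    calc |(u : C(X, ℝ)) x - (u : C(X, ℝ)) y|
        = |(u : C(X, ℝ)) y - (u : C(X, ℝ)) x| := abs_sub_comm _ _
      _ ≤ 1/(q+1) := h2
      _ < ε := hq
  have hScompact : IsCompact S :=
    ArzelaAscoli.isCompact_of_equicontinuous S (himg ▸ hAcompact) hS2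
  -- the sequence inside S
  set g : ℕ → C(X, ℝ) := fun n =>
    ContinuousMap.mk (X.restrict (f n)) ((hFG (f n) (hf n)).1.restrict) with hg
  have hgS : ∀ n, g n ∈ S := by
    intro n
    refine ⟨fun x => Set.mem_Icc.mpr ⟨((hFG _ (hf n)).2 x.1 x.2).1,
      ((hFG _ (hf n)).2 x.1 x.2).2⟩, fun q x y hy => ?_⟩
    exact le_of_lt (hδ q x (f n) (hf n) y.1 y.2 hy)
  obtain ⟨a, haS, φ, hφ, hconv⟩ := hScompact.tendsto_subseq hgS
  -- the limit function
  set l : ℝ → ℝ := fun t => a ⟨max t 0, Set.mem_Ici.mpr (le_max_right t 0)⟩ with hl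
  have hl_cont : Continuous l :=
    a.continuous.comp (Continuous.subtype_mk (continuous_id.max continuous_const) _)
  have hl_mem : ∀ t, z ≤ l t ∧ l t ≤ xbar0 := fun t =>
    ⟨(haS.1 _).1, (haS.1 _).2⟩
  have hl_eq : ∀ (t : ℝ) (ht : t ∈ X), l t = a ⟨t, ht⟩ := fun t ht =>
    congrArg a (Subtype.ext (max_eq_left (Set.mem_Ici.mp ht)))
  refine ⟨φ, hφ, l, ⟨hl_cont.continuousOn, ⟨M, ?_⟩⟩, ?_⟩
  · rintro v ⟨t, ht, rfl⟩
    have h1 : Real.exp (-k * t) ≤ 1 := by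
      rw [Real.exp_le_one_iff]
      have := mul_nonneg hk.le (Set.mem_Ici.mp ht)
      linarith
    have h2 : |l t| ≤ M := hzM _ (hl_mem t).1 (hl_mem t).2
    calc Real.exp (-k * t) * |l t| ≤ 1 * M :=
        mul_le_mul h1 h2 (abs_nonneg _) zero_le_one
      _ = M := one_mul M
  -- the convergence in the weighted norm
  set M2 : ℝ := 2 * M + 1 with hM2def
  have hM2 : (0:ℝ) < M2 := by rw [hM2def]; linarith
  have hDbd : ∀ n t, t ∈ X → |(f (φ n) - l) t| ≤ 2 * M := by
    intro n t ht
    have h1 := hzM _ (((hFG _ (hf (φ n))).2 t (Set.mem_Ici.mp ht)).1)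
      (((hFG _ (hf (φ n))).2 t (Set.mem_Ici.mp ht)).2)
    have h2 := hzM _ (hl_mem t).1 (hl_mem t).2
    rw [Pi.sub_apply, abs_le]
    rw [abs_le] at h1 h2
    constructor <;> [linarith [h1.1, h2.2]; linarith [h1.2, h2.1]]
  have helt : ∀ n t, t ∈ X → Real.exp (-k * t) * |(f (φ n) - l) t| ≤ 2 * M := by
    intro n t ht
    have h1 : Real.exp (-k * t) ≤ 1 := by
      rw [Real.exp_le_one_iff]
      have := mul_nonneg hk.le (Set.mem_Ici.mp ht)
      linarith
    calc Real.exp (-k * t) * |(f (φ n) - l) t| ≤ 1 * (2 * M) :=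
        mul_le_mul h1 (hDbd n t ht) (abs_nonneg _) zero_le_one
      _ = 2 * M := one_mul _
  have hEbdd : ∀ n, BddAbove
      ((fun t => Real.exp (-k * t) * |(f (φ n) - l) t|) '' Set.Ici (0 : ℝ)) := by
    intro n
    refine ⟨2 * M, ?_⟩
    rintro v ⟨t, ht, rfl⟩
    exact helt n t ht
  have h0le : ∀ n, 0 ≤ normk k (f (φ n) - l) := by
    intro n
    have hmem : Real.exp (-k * 0) * |(f (φ n) - l) 0|
        ∈ (fun t => Real.exp (-k * t) * |(f (φ n) - l) t|) '' Set.Ici (0 : ℝ) :=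
      ⟨0, Set.self_mem_Ici, rfl⟩
    refine le_trans (by positivity) (le_csSup (hEbdd n) hmem)
  rw [Metric.tendsto_atTop]
  intro ε hε
  -- pick the cutoff T
  have hexp0 : Filter.Tendsto (fun t : ℝ => Real.exp (-k * t))
      Filter.atTop (nhds 0) := by
    have h1 : Filter.Tendsto (fun t : ℝ => k * t) Filter.atTop Filter.atTop :=
      Filter.Tendsto.const_mul_atTop hk Filter.tendsto_id
    have h2 : Filter.Tendsto (fun t : ℝ => -(k * t)) Filter.atTop Filter.atBot :=
      Filter.tendsto_neg_atTop_atBot.comp h1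
    have h3 := Real.tendsto_exp_atBot.comp h2
    have h4 : (Real.exp ∘ fun t : ℝ => -(k * t)) = fun t : ℝ => Real.exp (-k * t) := by
      funext t; simp [Function.comp, neg_mul]
    rwa [h4] at h3
  have hev := (hexp0.eventually
    (gt_mem_nhds (show (0:ℝ) < ε/(2*M2) by positivity))).and
    (Filter.eventually_ge_atTop (0:ℝ))
  obtain ⟨T, hT2, hT0⟩ := hev.exists
  -- uniform convergence on [0,T]
  set K : Set X := Subtype.val ⁻¹' Set.Icc 0 T with hK
  have hKc : IsCompact K := hce.isCompact_preimage isCompact_Icc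
  have hUnif := ContinuousMap.tendsto_iff_forall_isCompact_tendstoUniformlyOn.mp
    hconv K hKc
  obtain ⟨N, hN⟩ := Filter.eventually_atTop.mp
    (Metric.tendstoUniformlyOn_iff.mp hUnif (ε/2) (by positivity))
  refine ⟨N, fun n hn => ?_⟩
  rw [Real.dist_eq, sub_zero, abs_of_nonneg (h0le n)]
  have hle : normk k (f (φ n) - l) ≤ ε/2 := by
    unfold normk
    refine Real.sSup_le ?_ (by positivity)
    rintro v ⟨t, ht, rfl⟩
    have ht' : (0:ℝ) ≤ t := Set.mem_Ici.mp ht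
    have hDt : (f (φ n) - l) t = f (φ n) t - a ⟨t, ht⟩ := by
      rw [Pi.sub_apply, hl_eq t ht]
    by_cases hcase : t ≤ T
    · have hxK : (⟨t, ht⟩ : X) ∈ K := Set.mem_Icc.mpr ⟨ht', hcase⟩
      have hcl := hN n hn ⟨t, ht⟩ hxK
      rw [Real.dist_eq] at hcl
      have hD : |(f (φ n) - l) t| ≤ ε/2 := by
        rw [hDt, abs_sub_comm]
        exact le_of_lt hcl
      have h1 : Real.exp (-k * t) ≤ 1 := by
        rw [Real.exp_le_one_iff]
        have := mul_nonneg hk.le ht'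
        linarith
      calc Real.exp (-k * t) * |(f (φ n) - l) t| ≤ 1 * (ε/2) :=
          mul_le_mul h1 hD (abs_nonneg _) zero_le_one
        _ = ε/2 := one_mul _
    · push_neg at hcase
      have hexpT : Real.exp (-k * t) ≤ Real.exp (-k * T) := by
        rw [Real.exp_le_exp]
        nlinarith
      have hD2 : |(f (φ n) - l) t| ≤ M2 := by
        refine (hDbd n t ht).trans ?_
        rw [hM2def]; linarith
      calc Real.exp (-k * t) * |(f (φ n) - l) t| ≤ Real.exp (-k * T) * M2 :=
          mul_le_mul hexpT hD2 (abs_nonneg _) (Real.exp_pos _).le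
        _ ≤ (ε/(2*M2)) * M2 := mul_le_mul_of_nonneg_right hT2.le hM2.le
        _ = ε/2 := by field_simp
  linarith
end

section
/- Let a, b, r, δ, q⁰, k₀ > 0. Let q : [0,∞) → ℝ be continuous with 0 ≤ q(t) ≤ k₀ t for all t ≥ 0, and let π : [0,∞) → ℝ be a continuous nonnegative function satisfying, for all t ≥ 0, the integral equation π(t) = ∫_t^∞ exp( −∫_t^η (2a + δ + (b²/r) π(τ)) dτ ) (q(η) + q⁰) dη (all integrals being finite). Then for all t ≥ 0, π(t) ≤ (k₀/(2a)) t + k₀/(4a²) + q⁰/(2a). -/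
/-!
Since `π ≥ 0` and `δ > 0`, the discount rate `2a + δ + (b²/r) π` in the kernel is at least
`2a`, and `q η + q⁰ ≤ k₀ η + q⁰`. Hence `π t` is dominated by the explicit integral
`∫_t^∞ e^{-2a(η-t)} (k₀ η + q⁰) dη = (k₀ t + q⁰)/(2a) + k₀/(2a)²`.
-/

open MeasureTheory Filter Topology

lemma tendsto_exp_neg_mul_sub_mul_affine {c : ℝ} (hc : 0 < c) (t A B : ℝ) :
    Tendsto (fun x => Real.exp (-(c * (x - t))) * (A * x + B)) atTop (𝓝 0) := by
  have hlin : Tendsto (fun x : ℝ => x * Real.exp (-c * x)) atTop (𝓝 0) := by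
    simpa using tendsto_rpow_mul_exp_neg_mul_atTop_nhds_zero 1 c hc
  have hexp : Tendsto (fun x : ℝ => Real.exp (-c * x)) atTop (𝓝 0) := by
    have := Real.tendsto_exp_neg_atTop_nhds_zero.comp (tendsto_id.const_mul_atTop hc)
    simpa only [Function.comp_def, id, neg_mul] using this
  have hsplit : (fun x => Real.exp (-(c * (x - t))) * (A * x + B)) =
      fun x => Real.exp (c * t) * (A * (x * Real.exp (-c * x)) + B * Real.exp (-c * x)) := by
    funext x
    rw [show -(c * (x - t)) = c * t + -c * x by ring, Real.exp_add]
    ring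
  rw [hsplit]
  simpa using ((hlin.const_mul A).add (hexp.const_mul B)).const_mul (Real.exp (c * t))

lemma integral_Ioi_exp_neg_mul_sub_mul_affine {c k m t : ℝ} (hc : 0 < c) (hk : 0 ≤ k)
    (hkm : 0 ≤ k * t + m) :
    IntegrableOn (fun η => Real.exp (-(c * (η - t))) * (k * η + m)) (Set.Ioi t) ∧
    ∫ η in Set.Ioi t, Real.exp (-(c * (η - t))) * (k * η + m) =
      (k * t + m) / c + k / c ^ 2 := by
  set G : ℝ → ℝ := fun η =>
    -(Real.exp (-(c * (η - t))) * (k / c * η + (m / c + k / c ^ 2)))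
  have hG : ∀ x ∈ Set.Ici t, HasDerivAt G (Real.exp (-(c * (x - t))) * (k * x + m)) x := by
    intro x _
    have hlin : HasDerivAt (fun η : ℝ => c * (η - t)) c x := by
      simpa using ((hasDerivAt_id x).sub_const t).const_mul c
    have hinner : HasDerivAt (fun η : ℝ => -(c * (η - t))) (-c) x := hlin.neg
    have hpoly : HasDerivAt (fun η : ℝ => k / c * η + (m / c + k / c ^ 2)) (k / c) x := by
      simpa using ((hasDerivAt_id x).const_mul (k / c)).add_const (m / c + k / c ^ 2)
    refine (hinner.exp.mul hpoly).neg.congr_deriv ?_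
    field_simp
    ring
  have hnonneg : ∀ x ∈ Set.Ioi t, 0 ≤ Real.exp (-(c * (x - t))) * (k * x + m) := by
    intro x hx
    have : k * t ≤ k * x := mul_le_mul_of_nonneg_left (le_of_lt hx) hk
    exact mul_nonneg (Real.exp_nonneg _) (by linarith)
  have hlim : Tendsto G atTop (𝓝 0) := by
    simpa using (tendsto_exp_neg_mul_sub_mul_affine hc t (k / c) (m / c + k / c ^ 2)).neg
  have hint := integrableOn_Ioi_deriv_of_nonneg' hG hnonneg hlim
  refine ⟨hint, ?_⟩
  rw [integral_Ioi_of_hasDerivAt_of_tendsto' hG hint hlim]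
  simp only [G, sub_self, mul_zero, neg_zero, Real.exp_zero, one_mul, zero_sub, neg_neg]
  ring

lemma mul_sub_le_intervalIntegral {f : ℝ → ℝ} {c t η : ℝ} (htη : t ≤ η)
    (hf : ContinuousOn f (Set.Icc t η)) (hcf : ∀ τ ∈ Set.Icc t η, c ≤ f τ) :
    c * (η - t) ≤ ∫ τ in t..η, f τ := by
  have hmono := intervalIntegral.integral_mono_on htη intervalIntegrable_const
    (hf.intervalIntegrable_of_Icc (μ := volume) htη) hcf
  rwa [intervalIntegral.integral_const, smul_eq_mul, mul_comm] at hmono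

theorem riccati_linear_growth_bound_general (a b r δ q0 k0 : ℝ)
    (ha : 0 < a) (hr : 0 < r) (hδ : 0 < δ) (hq0 : 0 < q0)
    (hk0 : 0 < k0) (q π : ℝ → ℝ)
    (hπc : ContinuousOn π (Set.Ici 0))
    (hq : ∀ t ≥ (0 : ℝ), 0 ≤ q t ∧ q t ≤ k0 * t)
    (hπnn : ∀ t ≥ (0 : ℝ), 0 ≤ π t)
    (hInt : ∀ t ≥ (0 : ℝ), IntegrableOn
      (fun η => Real.exp (-(∫ τ in t..η, (2 * a + δ + (b ^ 2 / r) * π τ))) *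
        (q η + q0)) (Set.Ioi t))
    (heq : ∀ t ≥ (0 : ℝ), π t = ∫ η in Set.Ioi t,
      Real.exp (-(∫ τ in t..η, (2 * a + δ + (b ^ 2 / r) * π τ))) *
        (q η + q0)) :
    ∀ t ≥ (0 : ℝ), π t ≤ (k0 / (2 * a)) * t + k0 / (4 * a ^ 2) + q0 / (2 * a) := by
  intro t ht
  obtain ⟨hdomInt, hdomVal⟩ := integral_Ioi_exp_neg_mul_sub_mul_affine (t := t)
    (by positivity : 0 < 2 * a) hk0.le (by positivity : 0 ≤ k0 * t + q0)
  have hbound : (k0 * t + q0) / (2 * a) + k0 / (2 * a) ^ 2 =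
      (k0 / (2 * a)) * t + k0 / (4 * a ^ 2) + q0 / (2 * a) := by
    field_simp
    ring
  rw [heq t ht, ← hbound, ← hdomVal]
  refine setIntegral_mono_on (hInt t ht) hdomInt measurableSet_Ioi fun η hη => ?_
  have hrate : 2 * a * (η - t) ≤ ∫ τ in t..η, (2 * a + δ + (b ^ 2 / r) * π τ) := by
    refine mul_sub_le_intervalIntegral (le_of_lt hη)
      (continuousOn_const.add (continuousOn_const.mul (hπc.mono fun τ hτ => ht.trans hτ.1)))
      fun τ hτ => ?_
    have hπτ := hπnn τ (ht.trans hτ.1)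
    have : 0 ≤ b ^ 2 / r * π τ := by positivity
    linarith
  obtain ⟨hq_nonneg, hq_le⟩ := hq η (ht.trans (le_of_lt hη))
  exact mul_le_mul (Real.exp_le_exp.mpr (neg_le_neg hrate)) (by linarith) (by linarith)
    (Real.exp_nonneg _)

/-- Linear-growth bound on the Riccati solution: if `0 ≤ q(t) ≤ k₀ t` and `π`
is the nonnegative solution of the Riccati integral equation, then
`π(t) ≤ (k₀/(2a)) t + k₀/(4a²) + q⁰/(2a)` for all `t ≥ 0`. -/
theorem riccati_linear_growth_bound (a b r δ q0 k0 : ℝ)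
    (ha : 0 < a) (hb : 0 < b) (hr : 0 < r) (hδ : 0 < δ) (hq0 : 0 < q0)
    (hk0 : 0 < k0) (q π : ℝ → ℝ)
    (hqc : ContinuousOn q (Set.Ici 0))
    (hπc : ContinuousOn π (Set.Ici 0))
    (hq : ∀ t ≥ (0 : ℝ), 0 ≤ q t ∧ q t ≤ k0 * t)
    (hπnn : ∀ t ≥ (0 : ℝ), 0 ≤ π t)
    (hInt : ∀ t ≥ (0 : ℝ), IntegrableOn
      (fun η => Real.exp (-(∫ τ in t..η, (2 * a + δ + (b ^ 2 / r) * π τ))) *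
        (q η + q0)) (Set.Ioi t))
    (heq : ∀ t ≥ (0 : ℝ), π t = ∫ η in Set.Ioi t,
      Real.exp (-(∫ τ in t..η, (2 * a + δ + (b ^ 2 / r) * π τ))) *
        (q η + q0)) :
    ∀ t ≥ (0 : ℝ), π t ≤ (k0 / (2 * a)) * t + k0 / (4 * a ^ 2) + q0 / (2 * a) :=
  riccati_linear_growth_bound_general a b r δ q0 k0 ha hr hδ hq0 hk0 q π hπc hq hπnn hInt heq
end

section
/- Let a, b, r, δ > 0 and let 0 < k < 2a + δ. Let q, q' : [0,∞) → ℝ be continuous nonnegative functions of at most linear growth, and let π, π' : [0,∞) → ℝ be continuous nonnegative functions satisfying, for all t ≥ 0, π(t) = ∫_t^∞ exp(−∫_t^η (2a + δ + (b²/r)π(τ)) dτ)(q(η) + q⁰) dη and π'(t) = ∫_t^∞ exp(−∫_t^η (2a + δ + (b²/r)π'(τ)) dτ)(q'(η) + q⁰) dη, for some q⁰ > 0 (all integrals finite). If sup_{t≥0} e^{-kt}|q(t) − q'(t)| ≤ c < ∞, then sup_{t≥0} e^{-kt}|π(t) − π'(t)| ≤ c/(2a + δ − k). -/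
/-!
Differentiating the integral equations shows that `π` and `π'` solve the Riccati equations
`p' = (2a + δ + (b²/r) p) p - q - q⁰`, so their difference `d` solves the linear equation
`d' = w d - (q - q')` with `w = 2a + δ + (b²/r)(π + π') ≥ 2a + δ`. With the integrating factor
`W = exp (-∫₀ w)` this gives `d(t) W(t) = d(s) W(s) + ∫ₜˢ (q - q') W` for `t ≤ s`. As `W` decays at
rate at least `2a + δ` while `|q - q'| ≤ c e^{kt}`, the integral is at most
`c e^{kt} W(t) / (2a + δ - k)`. The boundary term vanishes as `s → ∞`: `W` decays at least as fast
as `exp (-∫₀ˢ (2a + δ + (b²/r) π))`, and `exp (-∫₀ˢ (2a + δ + (b²/r) π)) π(s)` is the tail `∫ₛ^∞`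
of an integrable function.
-/

open MeasureTheory Set Filter Topology

namespace Riccati

open Real

lemma intervalIntegrable_of_continuousOn_Ici {f : ℝ → ℝ} {a b c : ℝ}
    (hf : ContinuousOn f (Ici a)) (hb : a ≤ b) (hc : a ≤ c) : IntervalIntegrable f volume b c :=
  (hf.mono fun _ hx => le_min hb hc |>.trans hx.1).intervalIntegrable

lemma hasDerivAt_integral_of_continuousOn_Ioi {f : ℝ → ℝ} {a t : ℝ}
    (hf : ContinuousOn f (Ioi a)) (hint : IntervalIntegrable f volume a t) (ht : a < t) :
    HasDerivAt (fun u => ∫ x in a..u, f x) (f t) t :=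
  intervalIntegral.integral_hasDerivAt_right hint (hf.stronglyMeasurableAtFilter isOpen_Ioi t ht)
    (hf.continuousAt (Ioi_mem_nhds ht))

lemma continuousOn_exp_neg_integral {w : ℝ → ℝ} (hw : ContinuousOn w (Ici 0)) {s : ℝ}
    (hs : 0 ≤ s) : ContinuousOn (fun x => exp (-∫ τ in 0..x, w τ)) (Icc 0 s) := by
  have hP := intervalIntegral.continuousOn_primitive_interval'
    (intervalIntegrable_of_continuousOn_Ici hw le_rfl hs) left_mem_uIcc
  rw [uIcc_of_le hs] at hP
  exact hP.neg.rexp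

lemma exp_neg_integral_le_mul {w : ℝ → ℝ} {l t s : ℝ} (hw : ContinuousOn w (Ici 0))
    (hlw : ∀ x ≥ 0, l ≤ w x) (ht : 0 ≤ t) (hts : t ≤ s) :
    exp (-∫ τ in 0..s, w τ) ≤ exp (-∫ τ in 0..t, w τ) * exp (-l * (s - t)) := by
  have hsplit : ∫ τ in 0..s, w τ = (∫ τ in 0..t, w τ) + ∫ τ in t..s, w τ :=
    (intervalIntegral.integral_add_adjacent_intervals
      (intervalIntegrable_of_continuousOn_Ici hw le_rfl ht)
      (intervalIntegrable_of_continuousOn_Ici hw ht (ht.trans hts))).symm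
  have hmono : l * (s - t) ≤ ∫ τ in t..s, w τ := by
    simpa [mul_comm] using intervalIntegral.integral_mono_on hts intervalIntegrable_const
      (intervalIntegrable_of_continuousOn_Ici hw ht (ht.trans hts))
      fun x hx => hlw x (ht.trans hx.1)
  rw [← exp_add, hsplit]
  gcongr
  linarith

lemma integral_exp_mul_le {a t s : ℝ} (ha : a < 0) (hts : t ≤ s) :
    ∫ x in t..s, exp (a * x) ≤ -exp (a * t) / a := by
  rw [← intervalIntegral.integral_Ioi_sub_Ioi (integrableOn_exp_mul_Ioi ha t) hts,
    integral_exp_mul_Ioi ha]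
  linarith [setIntegral_nonneg (μ := volume) (s := Ioi s) measurableSet_Ioi
    fun x _ => (exp_pos (a * x)).le]

noncomputable def discountedTail (g u : ℝ → ℝ) (t : ℝ) : ℝ :=
  ∫ η in Ioi t, exp (-∫ τ in t..η, g τ) * u η

section DiscountedTail

variable {g u p : ℝ → ℝ}

lemma discountedTail_eq_exp_mul (hg : ContinuousOn g (Ici 0)) {t : ℝ} (ht : 0 ≤ t) :
    discountedTail g u t =
      exp (∫ τ in 0..t, g τ) * ∫ η in Ioi t, exp (-∫ τ in 0..η, g τ) * u η := by
  rw [discountedTail, ← integral_const_mul]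
  refine setIntegral_congr_fun measurableSet_Ioi fun η hη => ?_
  rw [← intervalIntegral.integral_interval_sub_left
    (intervalIntegrable_of_continuousOn_Ici hg le_rfl (ht.trans (le_of_lt hη)))
    (intervalIntegrable_of_continuousOn_Ici hg le_rfl ht), neg_sub, sub_eq_add_neg, exp_add]
  ring

lemma hasDerivAt_of_eq_discountedTail (hg : ContinuousOn g (Ici 0)) (hu : ContinuousOn u (Ioi 0))
    (hI : IntegrableOn (fun η => exp (-∫ τ in 0..η, g τ) * u η) (Ioi 0))
    (hp : ∀ s ≥ 0, p s = discountedTail g u s) {t : ℝ} (ht : 0 < t) :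
    HasDerivAt p (g t * p t - u t) t := by
  set P := fun x => ∫ τ in 0..x, g τ
  set h := fun η => exp (-P η) * u η
  have hP : ∀ x > 0, HasDerivAt P (g x) x := fun x hx =>
    hasDerivAt_integral_of_continuousOn_Ioi (hg.mono Ioi_subset_Ici_self)
      (intervalIntegrable_of_continuousOn_Ici hg le_rfl hx.le) hx
  have hh : ContinuousOn h (Ioi 0) :=
    ((continuousOn_of_forall_continuousAt fun x hx => (hP x hx).continuousAt).neg.rexp).mul hu
  have hpG : ∀ s ≥ 0, p s = exp (P s) * ((∫ η in Ioi 0, h η) - ∫ η in 0..s, h η) := by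
    intro s hs
    rw [hp s hs, discountedTail_eq_exp_mul hg hs, ← intervalIntegral.integral_Ioi_sub_Ioi hI hs,
      sub_sub_cancel]
  have hG : HasDerivAt (fun s => (∫ η in Ioi 0, h η) - ∫ η in 0..s, h η) (-h t) t :=
    (hasDerivAt_integral_of_continuousOn_Ioi hh ((intervalIntegrable_iff_integrableOn_Ioc_of_le
      ht.le).mpr (hI.mono_set Ioc_subset_Ioi_self)) ht).const_sub _
  have hderiv := ((hP t ht).exp.mul hG).congr_of_eventuallyEq
    (eventually_of_mem (Ici_mem_nhds ht) hpG)
  refine hderiv.congr_deriv ?_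
  rw [hpG t ht.le]
  simp only [h, neg_mul_eq_mul_neg, ← mul_assoc, ← exp_add, add_neg_cancel, exp_zero]
  ring

lemma tendsto_exp_neg_integral_mul_of_eq_discountedTail (hg : ContinuousOn g (Ici 0))
    (hp : ∀ s ≥ 0, p s = discountedTail g u s) :
    Tendsto (fun s => exp (-∫ τ in 0..s, g τ) * p s) atTop (𝓝 0) := by
  refine (tendsto_integral_Ioi_zero (μ := volume)
    (f := fun η => exp (-∫ τ in 0..η, g τ) * u η) tendsto_id).congr' ?_
  filter_upwards [eventually_ge_atTop 0] with s hs
  rw [hp s hs, discountedTail_eq_exp_mul hg hs, ← mul_assoc, ← exp_add, neg_add_cancel, exp_zero,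
    one_mul, id]

end DiscountedTail

lemma tendsto_exp_neg_integral_mul_of_le {g w p : ℝ → ℝ} (hg : ContinuousOn g (Ici 0))
    (hw : ContinuousOn w (Ici 0)) (hgw : ∀ x ≥ 0, g x ≤ w x)
    (h : Tendsto (fun s => exp (-∫ τ in 0..s, g τ) * p s) atTop (𝓝 0)) :
    Tendsto (fun s => exp (-∫ τ in 0..s, w τ) * p s) atTop (𝓝 0) := by
  refine squeeze_zero_norm' ?_ (by simpa only [norm_zero] using h.norm)
  filter_upwards [eventually_ge_atTop 0] with s hs
  simp only [norm_mul, Real.norm_eq_abs, abs_exp]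
  gcongr
  exact intervalIntegral.integral_mono_on hs
    (intervalIntegrable_of_continuousOn_Ici hg le_rfl hs)
    (intervalIntegrable_of_continuousOn_Ici hw le_rfl hs) fun x hx => hgw x hx.1

section LinearEstimate

variable {d w f : ℝ → ℝ}

lemma hasDerivAt_mul_exp_neg_integral (hw : ContinuousOn w (Ici 0))
    (hd : ∀ x > 0, HasDerivAt d (w x * d x - f x) x) {x : ℝ} (hx : 0 < x) :
    HasDerivAt (fun y => d y * exp (-∫ τ in 0..y, w τ))
      (-(f x * exp (-∫ τ in 0..x, w τ))) x := by
  have hW := (hasDerivAt_integral_of_continuousOn_Ioi (hw.mono Ioi_subset_Ici_self)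
    (intervalIntegrable_of_continuousOn_Ici hw le_rfl hx.le) hx).neg.exp
  refine ((hd x hx).mul hW).congr_deriv ?_
  simp only [Pi.neg_apply]
  ring

lemma mul_exp_neg_integral_sub_eq_integral (hw : ContinuousOn w (Ici 0))
    (hf : ContinuousOn f (Ici 0)) (hdc : ContinuousOn d (Ici 0))
    (hd : ∀ x > 0, HasDerivAt d (w x * d x - f x) x) {t s : ℝ} (ht : 0 ≤ t) (hts : t ≤ s) :
    d t * exp (-∫ τ in 0..t, w τ) - d s * exp (-∫ τ in 0..s, w τ) =
      ∫ x in t..s, f x * exp (-∫ τ in 0..x, w τ) := by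
  have hIcc : Icc t s ⊆ Icc 0 s := Icc_subset_Icc_left ht
  have hW := (continuousOn_exp_neg_integral hw (ht.trans hts)).mono hIcc
  have hFTC := intervalIntegral.integral_eq_sub_of_hasDeriv_right_of_le hts
    ((hdc.mono (hIcc.trans Icc_subset_Ici_self)).mul hW)
    (fun x hx => (hasDerivAt_mul_exp_neg_integral hw hd (ht.trans_lt hx.1)).hasDerivWithinAt)
    (((hf.mono (hIcc.trans Icc_subset_Ici_self)).mul hW).neg.intervalIntegrable_of_Icc hts)
  rw [intervalIntegral.integral_neg] at hFTC
  simp only [Pi.mul_apply] at hFTC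
  linarith

lemma abs_integral_mul_exp_neg_integral_le {k l c : ℝ} (hkl : k < l) (hc : 0 ≤ c)
    (hw : ContinuousOn w (Ici 0)) (hlw : ∀ x ≥ 0, l ≤ w x) (hf : ContinuousOn f (Ici 0))
    (hfc : ∀ x ≥ 0, exp (-k * x) * |f x| ≤ c) {t s : ℝ} (ht : 0 ≤ t) (hts : t ≤ s) :
    |∫ x in t..s, f x * exp (-∫ τ in 0..x, w τ)| ≤
      c * exp (k * t) * exp (-∫ τ in 0..t, w τ) / (l - k) := by
  set W := fun x => exp (-∫ τ in 0..x, w τ)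
  have hfW : ContinuousOn (fun x => f x * W x) (Icc t s) :=
    (hf.mono fun x hx => ht.trans hx.1).mul
      ((continuousOn_exp_neg_integral hw (ht.trans hts)).mono (Icc_subset_Icc_left ht))
  have hpointwise : ∀ x ∈ Icc t s, |f x * W x| ≤ c * W t * exp (l * t) * exp ((k - l) * x) := by
    intro x hx
    have hx0 : 0 ≤ x := ht.trans hx.1
    have hfx : |f x| ≤ c * exp (k * x) := by
      have := hfc x hx0
      rwa [neg_mul, exp_neg, inv_mul_le_iff₀ (exp_pos _), mul_comm] at this
    calc |f x * W x| = |f x| * W x := by rw [abs_mul, abs_of_pos (exp_pos _)]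
      _ ≤ c * exp (k * x) * (W t * exp (-l * (x - t))) := by
          gcongr
          exact exp_neg_integral_le_mul hw hlw ht hx.1
      _ = c * W t * exp (l * t) * exp ((k - l) * x) := by
          have : exp (k * x) * exp (-l * (x - t)) = exp (l * t) * exp ((k - l) * x) := by
            rw [← exp_add, ← exp_add]; ring_nf
          linear_combination (c * W t) * this
  calc |∫ x in t..s, f x * W x| ≤ ∫ x in t..s, |f x * W x| :=
        intervalIntegral.abs_integral_le_integral_abs hts
    _ ≤ ∫ x in t..s, c * W t * exp (l * t) * exp ((k - l) * x) :=
        intervalIntegral.integral_mono_on hts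
          (hfW.abs.intervalIntegrable_of_Icc hts) (Continuous.intervalIntegrable (by fun_prop) _ _)
          hpointwise
    _ = c * W t * exp (l * t) * ∫ x in t..s, exp ((k - l) * x) :=
        intervalIntegral.integral_const_mul _ _
    _ ≤ c * W t * exp (l * t) * (-exp ((k - l) * t) / (k - l)) := by
        gcongr
        exact integral_exp_mul_le (by linarith) hts
    _ = c * exp (k * t) * W t / (l - k) := by
        rw [mul_assoc _ (exp _), mul_div_assoc', mul_neg, ← exp_add, neg_div, ← div_neg, neg_sub]
        ring_nf

theorem exp_neg_mul_abs_le_of_hasDerivAt {k l c : ℝ} (hkl : k < l) (hc : 0 ≤ c)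
    (hw : ContinuousOn w (Ici 0)) (hlw : ∀ x ≥ 0, l ≤ w x) (hf : ContinuousOn f (Ici 0))
    (hfc : ∀ x ≥ 0, exp (-k * x) * |f x| ≤ c) (hdc : ContinuousOn d (Ici 0))
    (hd : ∀ x > 0, HasDerivAt d (w x * d x - f x) x)
    (hlim : Tendsto (fun s => exp (-∫ τ in 0..s, w τ) * d s) atTop (𝓝 0)) {t : ℝ} (ht : 0 ≤ t) :
    exp (-k * t) * |d t| ≤ c / (l - k) := by
  have hbound : ∀ s ≥ t, |d t| * exp (-∫ τ in 0..t, w τ) ≤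
      |exp (-∫ τ in 0..s, w τ) * d s| + c * exp (k * t) * exp (-∫ τ in 0..t, w τ) / (l - k) := by
    intro s hts
    have hforce := abs_integral_mul_exp_neg_integral_le hkl hc hw hlw hf hfc ht hts
    rw [← mul_exp_neg_integral_sub_eq_integral hw hf hdc hd ht hts] at hforce
    calc |d t| * exp (-∫ τ in 0..t, w τ) = |d t * exp (-∫ τ in 0..t, w τ)| := by
          rw [abs_mul, abs_of_pos (exp_pos _)]
      _ = |exp (-∫ τ in 0..s, w τ) * d s +
            (d t * exp (-∫ τ in 0..t, w τ) - d s * exp (-∫ τ in 0..s, w τ))| := by ring_nf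
      _ ≤ _ := (abs_add_le _ _).trans (by gcongr)
  have hdW : |d t| * exp (-∫ τ in 0..t, w τ) ≤
      c * exp (k * t) / (l - k) * exp (-∫ τ in 0..t, w τ) := by
    rw [← mul_div_right_comm]
    refine ge_of_tendsto (by simpa only [abs_zero, zero_add] using hlim.abs.add_const _) ?_
    filter_upwards [eventually_ge_atTop t] with s hs using hbound s hs
  calc exp (-k * t) * |d t| ≤ exp (-k * t) * (c * exp (k * t) / (l - k)) := by
        gcongr
        exact le_of_mul_le_mul_right hdW (exp_pos _)
    _ = c / (l - k) := by
        rw [mul_div_assoc', mul_left_comm, ← exp_add, neg_mul, neg_add_cancel, exp_zero, mul_one]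

end LinearEstimate

end Riccati

open Riccati

theorem riccati_weighted_norm_estimate_general (a b r δ k q0 c : ℝ)
    (hr : 0 < r) (hk2 : k < 2 * a + δ) (hc : 0 ≤ c)
    (q q' π π' : ℝ → ℝ)
    (hqc : ContinuousOn q (Set.Ici 0)) (hq'c : ContinuousOn q' (Set.Ici 0))
    (hπc : ContinuousOn π (Set.Ici 0)) (hπ'c : ContinuousOn π' (Set.Ici 0))
    (hπnn : ∀ t ≥ (0 : ℝ), 0 ≤ π t) (hπ'nn : ∀ t ≥ (0 : ℝ), 0 ≤ π' t)
    (hInt : ∀ t ≥ (0 : ℝ), IntegrableOn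
      (fun η => Real.exp (-(∫ τ in t..η, (2 * a + δ + (b ^ 2 / r) * π τ))) *
        (q η + q0)) (Set.Ioi t))
    (hInt' : ∀ t ≥ (0 : ℝ), IntegrableOn
      (fun η => Real.exp (-(∫ τ in t..η, (2 * a + δ + (b ^ 2 / r) * π' τ))) *
        (q' η + q0)) (Set.Ioi t))
    (heq : ∀ t ≥ (0 : ℝ), π t = ∫ η in Set.Ioi t,
      Real.exp (-(∫ τ in t..η, (2 * a + δ + (b ^ 2 / r) * π τ))) * (q η + q0))
    (heq' : ∀ t ≥ (0 : ℝ), π' t = ∫ η in Set.Ioi t,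
      Real.exp (-(∫ τ in t..η, (2 * a + δ + (b ^ 2 / r) * π' τ))) * (q' η + q0))
    (hqq' : ∀ t ≥ (0 : ℝ), Real.exp (-k * t) * |q t - q' t| ≤ c) :
    ∀ t ≥ (0 : ℝ), Real.exp (-k * t) * |π t - π' t| ≤ c / (2 * a + δ - k) := by
  intro t ht
  have hβ : 0 ≤ b ^ 2 / r := by positivity
  have hg : ContinuousOn (fun τ => 2 * a + δ + b ^ 2 / r * π τ) (Ici 0) := by fun_prop
  have hg' : ContinuousOn (fun τ => 2 * a + δ + b ^ 2 / r * π' τ) (Ici 0) := by fun_prop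
  have hw : ContinuousOn (fun τ => 2 * a + δ + b ^ 2 / r * (π τ + π' τ)) (Ici 0) := by fun_prop
  have hπd : ∀ x > 0, HasDerivAt π ((2 * a + δ + b ^ 2 / r * π x) * π x - (q x + q0)) x :=
    fun x hx => hasDerivAt_of_eq_discountedTail hg
      ((hqc.add continuousOn_const).mono Ioi_subset_Ici_self) (hInt 0 le_rfl) heq hx
  have hπ'd : ∀ x > 0, HasDerivAt π' ((2 * a + δ + b ^ 2 / r * π' x) * π' x - (q' x + q0)) x :=
    fun x hx => hasDerivAt_of_eq_discountedTail hg'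
      ((hq'c.add continuousOn_const).mono Ioi_subset_Ici_self) (hInt' 0 le_rfl) heq' hx
  have hd : ∀ x > 0, HasDerivAt (fun s => π s - π' s)
      ((2 * a + δ + b ^ 2 / r * (π x + π' x)) * (π x - π' x) - (q x - q' x)) x :=
    fun x hx => ((hπd x hx).sub (hπ'd x hx)).congr_deriv (by ring)
  have hlim := (tendsto_exp_neg_integral_mul_of_le hg hw
      (fun x hx => by gcongr; exact le_add_of_nonneg_right (hπ'nn x hx))
      (tendsto_exp_neg_integral_mul_of_eq_discountedTail hg heq)).sub
    (tendsto_exp_neg_integral_mul_of_le hg' hw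
      (fun x hx => by gcongr; exact le_add_of_nonneg_left (hπnn x hx))
      (tendsto_exp_neg_integral_mul_of_eq_discountedTail hg' heq'))
  rw [sub_zero] at hlim
  exact exp_neg_mul_abs_le_of_hasDerivAt hk2 hc hw
    (fun x hx => le_add_of_nonneg_right (mul_nonneg hβ (add_nonneg (hπnn x hx) (hπ'nn x hx))))
    (hqc.sub hq'c) hqq' (hπc.sub hπ'c) hd (by simpa only [Pi.sub_apply, mul_sub] using hlim) ht

/-- Lipschitz-type estimate in the weighted norm for the Riccati solutions:
if `sup_{t≥0} e^{-kt}|q(t) − q'(t)| ≤ c` then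
`sup_{t≥0} e^{-kt}|π(t) − π'(t)| ≤ c/(2a + δ − k)`. -/
theorem riccati_weighted_norm_estimate (a b r δ k q0 c : ℝ)
    (ha : 0 < a) (hb : 0 < b) (hr : 0 < r) (hδ : 0 < δ) (hq0 : 0 < q0)
    (hk : 0 < k) (hk2 : k < 2 * a + δ) (hc : 0 ≤ c)
    (q q' π π' : ℝ → ℝ)
    (hqc : ContinuousOn q (Set.Ici 0)) (hq'c : ContinuousOn q' (Set.Ici 0))
    (hqnn : ∀ t ≥ (0 : ℝ), 0 ≤ q t) (hq'nn : ∀ t ≥ (0 : ℝ), 0 ≤ q' t)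
    (hqgrow : ∃ C > (0 : ℝ), ∀ t ≥ (0 : ℝ), q t ≤ C * (1 + t))
    (hq'grow : ∃ C > (0 : ℝ), ∀ t ≥ (0 : ℝ), q' t ≤ C * (1 + t))
    (hπc : ContinuousOn π (Set.Ici 0)) (hπ'c : ContinuousOn π' (Set.Ici 0))
    (hπnn : ∀ t ≥ (0 : ℝ), 0 ≤ π t) (hπ'nn : ∀ t ≥ (0 : ℝ), 0 ≤ π' t)
    (hInt : ∀ t ≥ (0 : ℝ), IntegrableOn
      (fun η => Real.exp (-(∫ τ in t..η, (2 * a + δ + (b ^ 2 / r) * π τ))) *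
        (q η + q0)) (Set.Ioi t))
    (hInt' : ∀ t ≥ (0 : ℝ), IntegrableOn
      (fun η => Real.exp (-(∫ τ in t..η, (2 * a + δ + (b ^ 2 / r) * π' τ))) *
        (q' η + q0)) (Set.Ioi t))
    (heq : ∀ t ≥ (0 : ℝ), π t = ∫ η in Set.Ioi t,
      Real.exp (-(∫ τ in t..η, (2 * a + δ + (b ^ 2 / r) * π τ))) * (q η + q0))
    (heq' : ∀ t ≥ (0 : ℝ), π' t = ∫ η in Set.Ioi t,
      Real.exp (-(∫ τ in t..η, (2 * a + δ + (b ^ 2 / r) * π' τ))) * (q' η + q0))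
    (hqq' : ∀ t ≥ (0 : ℝ), Real.exp (-k * t) * |q t - q' t| ≤ c) :
    ∀ t ≥ (0 : ℝ), Real.exp (-k * t) * |π t - π' t| ≤ c / (2 * a + δ - k) :=
  riccati_weighted_norm_estimate_general a b r δ k q0 c hr hk2 hc q q' π π' hqc hq'c hπc hπ'c hπnn
    hπ'nn hInt hInt' heq heq' hqq'
end

section
/- For every k with 0 < k < min_{1≤s≤m} a^s + δ there exists a positive constant R_k, depending only on k and on the parameters a^s, b^s, δ, r, q^{x0}, n_s, z, x̄₀, such that for all x̄', x̄'' ∈ G, ‖M(x̄') − M(x̄'')‖_k ≤ λ R_k ‖x̄' − x̄''‖_k, where λ is the Lipschitz constant of g on [z − y, x̄₀ − y]. -/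
open MeasureTheory

/-- The set `G = {x continuous on [0,∞) : z ≤ x(t) ≤ x̄₀ for all t ≥ 0}`. -/
def Gset (z xbar0 : ℝ) : Set (ℝ → ℝ) :=
  {x : ℝ → ℝ | ContinuousOn x (Set.Ici 0) ∧
    ∀ t ≥ (0 : ℝ), z ≤ x t ∧ x t ≤ xbar0}

/-- The cost coefficient trajectory `Δ(x̄)(t) = |∫₀ᵗ g(x̄(τ) − y) dτ|`. -/
noncomputable def Δop (g : ℝ → ℝ) (y : ℝ) (x : ℝ → ℝ) (t : ℝ) : ℝ :=
  |∫ τ in (0 : ℝ)..t, g (x τ - y)|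

/-- `φ(t,η) = exp(−∫_η^t (a + (b²/r) π(τ)) dτ)` (here `br = b²/r`). -/
noncomputable def phiF (a br : ℝ) (π : ℝ → ℝ) (t η : ℝ) : ℝ :=
  Real.exp (-(∫ τ in η..t, (a + br * π τ)))

/-- `ψ(t,η) = exp(−∫_η^t (a + δ + (b²/r) π(τ)) dτ)` (here `br = b²/r`). -/
noncomputable def psiF (a δ br : ℝ) (π : ℝ → ℝ) (t η : ℝ) : ℝ :=
  Real.exp (-(∫ τ in η..t, (a + δ + br * π τ)))

/-- The mean-field operator
`M(x̄)(t) = Σ_s n_s [z + φˢ(t,0)(x̄₀ − z) + Cˢ ∫₀ᵗ φˢ(t,η) (∫_η^∞ ψˢ(τ,η) dτ) dη]`,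
where `πˢ = π s x̄` is the Riccati solution corresponding to `Δ(x̄)` and
`Cˢ = ((bˢ)²/r q^{x0} + (aˢ)² + aˢδ)(x̄₀ − z)`. -/
noncomputable def Mop (m : ℕ) (a b n : Fin m → ℝ) (δ r qx0 z xbar0 : ℝ)
    (π : Fin m → (ℝ → ℝ) → ℝ → ℝ) (x : ℝ → ℝ) (t : ℝ) : ℝ :=
  ∑ s : Fin m, n s *
    (z + phiF (a s) ((b s) ^ 2 / r) (π s x) t 0 * (xbar0 - z) +
      (((b s) ^ 2 / r) * qx0 + (a s) ^ 2 + (a s) * δ) * (xbar0 - z) *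
        ∫ η in (0 : ℝ)..t, phiF (a s) ((b s) ^ 2 / r) (π s x) t η *
          (∫ τ in Set.Ioi η, psiF (a s) δ ((b s) ^ 2 / r) (π s x) τ η))

/-!
Fix `x̄₁, x̄₂ ∈ G` and let `N = ‖x̄₁ - x̄₂‖_k`, so that `|x̄₁ - x̄₂| ≤ N e^{kt}`; the Lipschitz
bound on `g` then gives `|Δ(x̄₁) - Δ(x̄₂)| ≤ λ N e^{kt} / k`. Each `πˢ` solves
`π' = (2aˢ + δ + βπ) π - (Δ + q^{x0})` and `e^{-∫₀ᵗ (2aˢ + δ + βπ)} π(t) → 0`, so the difference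
`w = π₁ - π₂` of two solutions satisfies `w' = (2aˢ + δ + βπ₁ + βπ₂) w - (Δ₁ - Δ₂)`, and variation
of constants from `t = ∞` yields `|w| ≤ λ N e^{kt} / (k (2aˢ + δ - k))`. Finally `φˢ`, `ψˢ` depend
on `πˢ` only through `exp (-∫ β π)`, and `|e^{-u} - e^{-v}| ≤ e^{-c} |u - v|` for `u, v ≥ c`
carries this bound through the two integrals in `M`, at the decay rates `aˢ` and `aˢ + δ - k`.
-/

open Set Filter Topology

namespace MFG

section Primitive

variable {f : ℝ → ℝ} {a : ℝ}

theorem continuousOn_primitive_Ici (hf : ContinuousOn f (Ici a)) :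
    ContinuousOn (fun x => ∫ t in a..x, f t) (Ici a) := by
  intro x hx
  have hax : a ≤ x + 1 := by linarith [mem_Ici.1 hx]
  have hcont : ContinuousOn (fun x => ∫ t in a..x, f t) (Icc a (x + 1)) := by
    have := intervalIntegral.continuousOn_primitive_interval (μ := volume)
      ((hf.mono (uIcc_of_le hax ▸ Icc_subset_Ici_self)).integrableOn_compact isCompact_uIcc)
    rwa [uIcc_of_le hax] at this
  have hnhds : Icc a (x + 1) ∈ 𝓝[Ici a] x := by
    rw [← Ici_inter_Iic]
    exact inter_mem_nhdsWithin _ (Iic_mem_nhds (by linarith))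
  exact (hcont x ⟨hx, by linarith⟩).mono_of_mem_nhdsWithin hnhds

theorem hasDerivAt_primitive_of_continuousOn_Ici (hf : ContinuousOn f (Ici a)) {x : ℝ}
    (hx : a < x) : HasDerivAt (fun u => ∫ t in a..u, f t) (f x) x :=
  intervalIntegral.integral_hasDerivAt_right
    ((hf.mono (uIcc_of_le hx.le ▸ Icc_subset_Ici_self)).intervalIntegrable)
    (ContinuousOn.stronglyMeasurableAtFilter isOpen_Ioi (hf.mono Ioi_subset_Ici_self) x hx)
    (hf.continuousAt (Ici_mem_nhds hx))

theorem intervalIntegrable_of_continuousOn_Ici (hf : ContinuousOn f (Ici a)) {s t : ℝ}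
    (hs : a ≤ s) (ht : a ≤ t) : IntervalIntegrable f volume s t :=
  (hf.mono fun _ hx => le_trans (le_min hs ht) hx.1).intervalIntegrable

end Primitive

section ExpIntegrals

theorem nonneg_of_abs_le_mul_exp {x W y : ℝ} (h : |x| ≤ W * Real.exp y) : 0 ≤ W :=
  nonneg_of_mul_nonneg_left ((abs_nonneg _).trans h) (Real.exp_pos _)

theorem integral_exp_mul {k : ℝ} (hk : k ≠ 0) (s t : ℝ) :
    ∫ τ in s..t, Real.exp (k * τ) = (Real.exp (k * t) - Real.exp (k * s)) / k := by
  rw [intervalIntegral.integral_comp_mul_left (fun x => Real.exp x) hk, integral_exp,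
    smul_eq_mul, div_eq_inv_mul]

theorem integral_exp_mul_le {k : ℝ} (hk : 0 < k) (s t : ℝ) :
    ∫ τ in s..t, Real.exp (k * τ) ≤ Real.exp (k * t) / k := by
  rw [integral_exp_mul hk.ne']
  gcongr
  linarith [Real.exp_pos (k * s)]

theorem integral_exp_neg_mul_sub_le {a : ℝ} (ha : 0 < a) (s t : ℝ) :
    ∫ η in s..t, Real.exp (-(a * (t - η))) ≤ 1 / a := by
  have hsplit : ∀ η, Real.exp (-(a * (t - η))) = Real.exp (-(a * t)) * Real.exp (a * η) := by
    intro η; rw [← Real.exp_add]; ring_nf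
  simp_rw [hsplit, intervalIntegral.integral_const_mul]
  calc Real.exp (-(a * t)) * ∫ η in s..t, Real.exp (a * η)
      ≤ Real.exp (-(a * t)) * (Real.exp (a * t) / a) := by
        gcongr; exact integral_exp_mul_le ha s t
    _ = 1 / a := by rw [mul_div_assoc', ← Real.exp_add]; simp

theorem integrableOn_exp_neg_mul_sub {c : ℝ} (hc : 0 < c) (t : ℝ) :
    IntegrableOn (fun η => Real.exp (-(c * (η - t)))) (Ioi t) := by
  refine IntegrableOn.congr_fun
    ((exp_neg_integrableOn_Ioi t hc).const_mul (Real.exp (c * t))) (fun η _ => ?_) measurableSet_Ioi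
  rw [← Real.exp_add]; ring_nf

theorem integral_exp_neg_mul_sub {c : ℝ} (hc : 0 < c) (t : ℝ) :
    ∫ η in Ioi t, Real.exp (-(c * (η - t))) = 1 / c := by
  have hsplit : ∀ η, Real.exp (-(c * (η - t))) = Real.exp (c * t) * Real.exp (-c * η) := by
    intro η; rw [← Real.exp_add]; ring_nf
  simp_rw [hsplit]
  rw [integral_const_mul, integral_exp_mul_Ioi (neg_lt_zero.2 hc), mul_div_assoc', mul_neg,
    ← Real.exp_add]
  field_simp
  simp

theorem integral_exp_neg_mul_sub_le_of_le {c : ℝ} (hc : 0 < c) {t T : ℝ} (h : t ≤ T) :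
    ∫ η in t..T, Real.exp (-(c * (η - t))) ≤ 1 / c := by
  rw [intervalIntegral.integral_of_le h, ← integral_exp_neg_mul_sub hc t]
  exact setIntegral_mono_set (integrableOn_exp_neg_mul_sub hc t)
    (Eventually.of_forall fun η => (Real.exp_pos _).le)
    Ioc_subset_Ioi_self.eventuallyLE

theorem abs_exp_neg_sub_exp_neg_le {c u v : ℝ} (hu : c ≤ u) (hv : c ≤ v) :
    |Real.exp (-u) - Real.exp (-v)| ≤ Real.exp (-c) * |u - v| := by
  wlog huv : v ≤ u generalizing u v
  · rw [abs_sub_comm, abs_sub_comm u v]; exact this hv hu (le_of_not_ge huv)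
  have hfactor : Real.exp (-v) - Real.exp (-u) = Real.exp (-v) * (1 - Real.exp (-(u - v))) := by
    rw [mul_sub, mul_one, ← Real.exp_add]; ring_nf
  rw [abs_of_nonpos (by linarith [Real.exp_le_exp.2 (neg_le_neg huv)]), neg_sub, hfactor,
    abs_of_nonneg (sub_nonneg.2 huv)]
  exact mul_le_mul (Real.exp_le_exp.2 (neg_le_neg hv))
    (by linarith [Real.one_sub_le_exp_neg (u - v)])
    (by linarith [Real.exp_le_one_iff.2 (neg_nonpos.2 (sub_nonneg.2 huv))]) (Real.exp_pos _).le

theorem abs_integral_le_div_mul_exp {f : ℝ → ℝ} {W k s t : ℝ} (hk : 0 < k) (hst : s ≤ t)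
    (hf : IntervalIntegrable f volume s t) (hfb : ∀ τ ∈ Icc s t, |f τ| ≤ W * Real.exp (k * τ)) :
    |∫ τ in s..t, f τ| ≤ W / k * Real.exp (k * t) := by
  have hW : 0 ≤ W := nonneg_of_abs_le_mul_exp (hfb s ⟨le_rfl, hst⟩)
  calc |∫ τ in s..t, f τ| ≤ ∫ τ in s..t, |f τ| := intervalIntegral.abs_integral_le_integral_abs hst
    _ ≤ ∫ τ in s..t, W * Real.exp (k * τ) :=
        intervalIntegral.integral_mono_on hst hf.abs
          (Continuous.intervalIntegrable (by fun_prop) _ _) hfb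
    _ ≤ W * (Real.exp (k * t) / k) := by
        rw [intervalIntegral.integral_const_mul]
        exact mul_le_mul_of_nonneg_left (integral_exp_mul_le hk s t) hW
    _ = W / k * Real.exp (k * t) := by ring

end ExpIntegrals

section Kernel

variable {h h₁ h₂ : ℝ → ℝ} {c η t : ℝ}

theorem mul_sub_le_integral (hh : ContinuousOn h (Ici 0)) (hc : ∀ τ ≥ 0, c ≤ h τ)
    (hη : 0 ≤ η) (hηt : η ≤ t) : c * (t - η) ≤ ∫ τ in η..t, h τ := by
  have := intervalIntegral.integral_mono_on hηt intervalIntegrable_const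
    (intervalIntegrable_of_continuousOn_Ici hh hη (hη.trans hηt))
    (fun τ hτ => hc τ (hη.trans hτ.1))
  simpa [mul_comm] using this

theorem exp_neg_integral_le (hh : ContinuousOn h (Ici 0)) (hc : ∀ τ ≥ 0, c ≤ h τ)
    (hη : 0 ≤ η) (hηt : η ≤ t) :
    Real.exp (-∫ τ in η..t, h τ) ≤ Real.exp (-(c * (t - η))) :=
  Real.exp_le_exp.2 (neg_le_neg (mul_sub_le_integral hh hc hη hηt))

theorem abs_exp_neg_integral_sub_le (hh₁ : ContinuousOn h₁ (Ici 0))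
    (hh₂ : ContinuousOn h₂ (Ici 0)) (hc₁ : ∀ τ ≥ 0, c ≤ h₁ τ) (hc₂ : ∀ τ ≥ 0, c ≤ h₂ τ)
    (hη : 0 ≤ η) (hηt : η ≤ t) :
    |Real.exp (-∫ τ in η..t, h₁ τ) - Real.exp (-∫ τ in η..t, h₂ τ)| ≤
      Real.exp (-(c * (t - η))) * |∫ τ in η..t, (h₁ τ - h₂ τ)| := by
  rw [intervalIntegral.integral_sub
    (intervalIntegrable_of_continuousOn_Ici hh₁ hη (hη.trans hηt))
    (intervalIntegrable_of_continuousOn_Ici hh₂ hη (hη.trans hηt))]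
  exact abs_exp_neg_sub_exp_neg_le (mul_sub_le_integral hh₁ hc₁ hη hηt)
    (mul_sub_le_integral hh₂ hc₂ hη hηt)

theorem continuousOn_exp_neg_integral (hh : ContinuousOn h (Ici 0)) (hη : 0 ≤ η) :
    ContinuousOn (fun t => Real.exp (-∫ τ in η..t, h τ)) (Ici η) :=
  (continuousOn_primitive_Ici (hh.mono (Ici_subset_Ici.2 hη))).neg.rexp

theorem integrableOn_exp_neg_integral (hh : ContinuousOn h (Ici 0)) (hc₀ : 0 < c)
    (hc : ∀ τ ≥ 0, c ≤ h τ) (hη : 0 ≤ η) :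
    IntegrableOn (fun t => Real.exp (-∫ τ in η..t, h τ)) (Ioi η) := by
  refine (integrableOn_exp_neg_mul_sub hc₀ η).mono'
    (((continuousOn_exp_neg_integral hh hη).mono Ioi_subset_Ici_self).aestronglyMeasurable
      measurableSet_Ioi)
    ((ae_restrict_iff' measurableSet_Ioi).2 (Eventually.of_forall fun t ht => ?_))
  rw [Real.norm_of_nonneg (Real.exp_pos _).le]
  exact exp_neg_integral_le hh hc hη (le_of_lt ht)

theorem continuousOn_rate {β : ℝ} {p : ℝ → ℝ} (hp : ContinuousOn p (Ici 0)) :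
    ContinuousOn (fun τ => c + β * p τ) (Ici 0) :=
  continuousOn_const.add (continuousOn_const.mul hp)

end Kernel

/-- The solution of `p' = h p - F` singled out by the condition at `t = ∞`; the equation for `πˢ`
reads `π = backwardIntegral (2aˢ + δ + β π) (Δ + q^{x0})`. -/
noncomputable def backwardIntegral (h F : ℝ → ℝ) (t : ℝ) : ℝ :=
  ∫ η in Ioi t, Real.exp (-∫ τ in t..η, h τ) * F η

section BackwardIntegral

variable {h F : ℝ → ℝ} {t : ℝ}

theorem backwardIntegral_eq_exp_mul (hh : ContinuousOn h (Ici 0)) (ht : 0 ≤ t) :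
    backwardIntegral h F t =
      Real.exp (∫ τ in (0 : ℝ)..t, h τ) *
        ∫ η in Ioi t, Real.exp (-∫ τ in (0 : ℝ)..η, h τ) * F η := by
  rw [backwardIntegral, ← integral_const_mul]
  refine setIntegral_congr_fun measurableSet_Ioi fun η hη => ?_
  have hη0 : 0 ≤ η := ht.trans (le_of_lt hη)
  rw [← intervalIntegral.integral_interval_sub_left
    (intervalIntegrable_of_continuousOn_Ici hh le_rfl hη0)
    (intervalIntegrable_of_continuousOn_Ici hh le_rfl ht), ← mul_assoc, ← Real.exp_add]
  ring_nf

variable (hh : ContinuousOn h (Ici 0))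
  (hint : IntegrableOn (fun η => Real.exp (-∫ τ in (0 : ℝ)..η, h τ) * F η) (Ioi 0))
include hh hint

theorem backwardIntegral_eq_exp_mul_sub (ht : 0 ≤ t) :
    backwardIntegral h F t = Real.exp (∫ τ in (0 : ℝ)..t, h τ) *
      ((∫ η in Ioi 0, Real.exp (-∫ τ in (0 : ℝ)..η, h τ) * F η) -
        ∫ η in (0 : ℝ)..t, Real.exp (-∫ τ in (0 : ℝ)..η, h τ) * F η) := by
  rw [backwardIntegral_eq_exp_mul hh ht, ← intervalIntegral.integral_Ioi_sub_Ioi hint ht,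
    sub_sub_cancel]

theorem tendsto_exp_neg_integral_mul_backwardIntegral :
    Tendsto (fun T => Real.exp (-∫ τ in (0 : ℝ)..T, h τ) * backwardIntegral h F T)
      atTop (𝓝 0) := by
  have hlim := (intervalIntegral_tendsto_integral_Ioi 0 hint tendsto_id).const_sub
    (∫ η in Ioi 0, Real.exp (-∫ τ in (0 : ℝ)..η, h τ) * F η)
  rw [sub_self] at hlim
  refine hlim.congr' ?_
  filter_upwards [eventually_ge_atTop 0] with T hT
  rw [backwardIntegral_eq_exp_mul_sub hh hint hT, ← mul_assoc, ← Real.exp_add,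
    neg_add_cancel, Real.exp_zero, one_mul]
  rfl

variable (hF : ContinuousOn F (Ici 0))
include hF

omit hint in
theorem continuousOn_exp_neg_integral_mul :
    ContinuousOn (fun η => Real.exp (-∫ τ in (0 : ℝ)..η, h τ) * F η) (Ici 0) :=
  (continuousOn_exp_neg_integral hh le_rfl).mul hF

theorem continuousOn_backwardIntegral : ContinuousOn (backwardIntegral h F) (Ici 0) := by
  refine ContinuousOn.congr ?_ fun u hu => backwardIntegral_eq_exp_mul_sub hh hint hu
  exact (continuousOn_primitive_Ici hh).rexp.mul
    (continuousOn_const.sub (continuousOn_primitive_Ici (continuousOn_exp_neg_integral_mul hh hF)))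

theorem hasDerivAt_backwardIntegral (ht : 0 < t) :
    HasDerivAt (backwardIntegral h F) (h t * backwardIntegral h F t - F t) t := by
  have hderiv := (hasDerivAt_primitive_of_continuousOn_Ici hh ht).exp.mul
    ((hasDerivAt_primitive_of_continuousOn_Ici (continuousOn_exp_neg_integral_mul hh hF)
      ht).const_sub
      (∫ η in Ioi 0, Real.exp (-∫ τ in (0 : ℝ)..η, h τ) * F η))
  have hEq : backwardIntegral h F =ᶠ[𝓝 t] fun u => Real.exp (∫ τ in (0 : ℝ)..u, h τ) *
      ((∫ η in Ioi 0, Real.exp (-∫ τ in (0 : ℝ)..η, h τ) * F η) -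
        ∫ η in (0 : ℝ)..u, Real.exp (-∫ τ in (0 : ℝ)..η, h τ) * F η) := by
    filter_upwards [Ioi_mem_nhds ht] with u hu
    exact backwardIntegral_eq_exp_mul_sub hh hint (le_of_lt hu)
  refine (hderiv.congr_of_eventuallyEq hEq).congr_deriv ?_
  have hinv : Real.exp (∫ τ in (0 : ℝ)..t, h τ) * Real.exp (-∫ τ in (0 : ℝ)..t, h τ) = 1 := by
    rw [← Real.exp_add, add_neg_cancel, Real.exp_zero]
  rw [backwardIntegral_eq_exp_mul_sub hh hint ht.le]
  linear_combination (-F t) * hinv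

end BackwardIntegral

theorem abs_integral_exp_neg_integral_mul_le {κ f : ℝ → ℝ} {c k ε t T : ℝ}
    (hκ : ContinuousOn κ (Ici 0)) (hc : ∀ τ ≥ 0, c ≤ κ τ) (hkc : k < c)
    (hf : ContinuousOn f (Ici 0)) (hfb : ∀ u ≥ 0, |f u| ≤ ε * Real.exp (k * u))
    (ht : 0 ≤ t) (htT : t ≤ T) :
    |∫ u in t..T, Real.exp (-∫ τ in t..u, κ τ) * f u| ≤ ε / (c - k) * Real.exp (k * t) := by
  have hck : 0 < c - k := sub_pos.2 hkc
  have hcont : ContinuousOn (fun u => Real.exp (-∫ τ in t..u, κ τ) * f u) (Icc t T) :=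
    ((continuousOn_exp_neg_integral hκ ht).mul (hf.mono (Ici_subset_Ici.2 ht))).mono
      Icc_subset_Ici_self
  have hpointwise : ∀ u ∈ Icc t T, |Real.exp (-∫ τ in t..u, κ τ) * f u| ≤
      ε * Real.exp (k * t) * Real.exp (-((c - k) * (u - t))) := by
    intro u hu
    rw [abs_mul, abs_of_pos (Real.exp_pos _)]
    calc Real.exp (-∫ τ in t..u, κ τ) * |f u|
        ≤ Real.exp (-(c * (u - t))) * (ε * Real.exp (k * u)) :=
          mul_le_mul (exp_neg_integral_le hκ hc ht hu.1) (hfb u (ht.trans hu.1))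
            (abs_nonneg _) (Real.exp_pos _).le
      _ = ε * Real.exp (k * t) * Real.exp (-((c - k) * (u - t))) := by
          rw [mul_left_comm, mul_assoc, ← Real.exp_add, ← Real.exp_add]; ring_nf
  calc |∫ u in t..T, Real.exp (-∫ τ in t..u, κ τ) * f u|
      ≤ ∫ u in t..T, |Real.exp (-∫ τ in t..u, κ τ) * f u| :=
        intervalIntegral.abs_integral_le_integral_abs htT
    _ ≤ ∫ u in t..T, ε * Real.exp (k * t) * Real.exp (-((c - k) * (u - t))) :=
        intervalIntegral.integral_mono_on htT (hcont.abs.intervalIntegrable_of_Icc htT)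
          (Continuous.intervalIntegrable (by fun_prop) _ _) hpointwise
    _ ≤ ε * Real.exp (k * t) * (1 / (c - k)) := by
        rw [intervalIntegral.integral_const_mul]
        have hε : 0 ≤ ε := nonneg_of_abs_le_mul_exp (hfb 0 le_rfl)
        exact mul_le_mul_of_nonneg_left (integral_exp_neg_mul_sub_le_of_le hck htT)
          (by positivity)
    _ = ε / (c - k) * Real.exp (k * t) := by ring

structure IsRiccatiSolution (c β : ℝ) (F p : ℝ → ℝ) : Prop where
  continuousOn : ContinuousOn p (Ici 0)
  nonneg : ∀ t ≥ 0, 0 ≤ p t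
  integrableOn :
    IntegrableOn (fun η => Real.exp (-∫ τ in (0 : ℝ)..η, (c + β * p τ)) * F η) (Ioi 0)
  eq_backwardIntegral : ∀ t ≥ 0, p t = backwardIntegral (fun τ => c + β * p τ) F t

namespace IsRiccatiSolution

section

variable {c β : ℝ} {F p : ℝ → ℝ} (hp : IsRiccatiSolution c β F p)
include hp

theorem hasDerivAt (hF : ContinuousOn F (Ici 0)) {t : ℝ} (ht : 0 < t) :
    HasDerivAt p ((c + β * p t) * p t - F t) t := by
  have hEq : p =ᶠ[𝓝 t] backwardIntegral (fun τ => c + β * p τ) F := by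
    filter_upwards [Ioi_mem_nhds ht] with u hu using hp.eq_backwardIntegral u (le_of_lt hu)
  have hderiv :=
    hasDerivAt_backwardIntegral (continuousOn_rate hp.continuousOn) hp.integrableOn hF ht
  rw [← hp.eq_backwardIntegral t ht.le] at hderiv
  exact hderiv.congr_of_eventuallyEq hEq

theorem tendsto_exp_neg_integral_mul {κ : ℝ → ℝ} (hκ : ContinuousOn κ (Ici 0))
    (hle : ∀ τ ≥ 0, c + β * p τ ≤ κ τ) {t : ℝ} (ht : 0 ≤ t) :
    Tendsto (fun T => Real.exp (-∫ τ in t..T, κ τ) * p T) atTop (𝓝 0) := by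
  have hlim := (tendsto_exp_neg_integral_mul_backwardIntegral (continuousOn_rate hp.continuousOn)
    hp.integrableOn).const_mul (Real.exp (∫ τ in (0 : ℝ)..t, (c + β * p τ)))
  rw [mul_zero] at hlim
  refine squeeze_zero' ?_ ?_ hlim
  · filter_upwards [eventually_ge_atTop t] with T hT
    exact mul_nonneg (Real.exp_pos _).le (hp.nonneg T (ht.trans hT))
  · filter_upwards [eventually_ge_atTop t] with T hT
    have hT0 : 0 ≤ T := ht.trans hT
    have hsplit : (∫ τ in (0 : ℝ)..t, (c + β * p τ)) + -∫ τ in (0 : ℝ)..T, (c + β * p τ) =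
        -∫ τ in t..T, (c + β * p τ) := by
      rw [← intervalIntegral.integral_interval_sub_left
        (intervalIntegrable_of_continuousOn_Ici (continuousOn_rate hp.continuousOn) le_rfl hT0)
        (intervalIntegrable_of_continuousOn_Ici (continuousOn_rate hp.continuousOn) le_rfl ht)]
      ring
    rw [← hp.eq_backwardIntegral T hT0, ← mul_assoc, ← Real.exp_add, hsplit]
    refine mul_le_mul_of_nonneg_right (Real.exp_le_exp.2 (neg_le_neg ?_)) (hp.nonneg T hT0)
    exact intervalIntegral.integral_mono_on hT
      (intervalIntegrable_of_continuousOn_Ici (continuousOn_rate hp.continuousOn) ht hT0)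
      (intervalIntegrable_of_continuousOn_Ici hκ ht hT0) fun τ hτ => hle τ (ht.trans hτ.1)

end

section Comparison

variable {c β k ε : ℝ} {F₁ F₂ p₁ p₂ : ℝ → ℝ}
  (hp₁ : IsRiccatiSolution c β F₁ p₁) (hp₂ : IsRiccatiSolution c β F₂ p₂)
  (hF₁ : ContinuousOn F₁ (Ici 0)) (hF₂ : ContinuousOn F₂ (Ici 0))
include hp₁ hp₂ hF₁ hF₂

/-- Variation of constants: `p₁ - p₂` solves `w' = (c + β p₁ + β p₂) w - (F₁ - F₂)`. -/
theorem sub_eq_exp_mul_add_integral {t T : ℝ} (ht : 0 ≤ t) (htT : t ≤ T) :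
    p₁ t - p₂ t = Real.exp (-∫ τ in t..T, (c + β * p₁ τ + β * p₂ τ)) * (p₁ T - p₂ T) +
      ∫ u in t..T, Real.exp (-∫ τ in t..u, (c + β * p₁ τ + β * p₂ τ)) * (F₁ u - F₂ u) := by
  have hκ : ContinuousOn (fun τ => c + β * p₁ τ + β * p₂ τ) (Ici 0) :=
    (continuousOn_rate hp₁.continuousOn).add (continuousOn_const.mul hp₂.continuousOn)
  have hderiv : ∀ u ∈ Ioo t T, HasDerivAt
      (fun v => Real.exp (-∫ τ in t..v, (c + β * p₁ τ + β * p₂ τ)) * (p₁ v - p₂ v))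
      (-(Real.exp (-∫ τ in t..u, (c + β * p₁ τ + β * p₂ τ)) * (F₁ u - F₂ u))) u := by
    intro u hu
    have hu0 : 0 < u := ht.trans_lt hu.1
    refine (((hasDerivAt_primitive_of_continuousOn_Ici (hκ.mono (Ici_subset_Ici.2 ht))
      hu.1).neg.exp).mul ((hp₁.hasDerivAt hF₁ hu0).sub (hp₂.hasDerivAt hF₂ hu0))).congr_deriv ?_
    simp only [Pi.neg_apply, Pi.sub_apply]
    ring
  have hcont : ContinuousOn
      (fun v => Real.exp (-∫ τ in t..v, (c + β * p₁ τ + β * p₂ τ)) * (p₁ v - p₂ v)) (Icc t T) :=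
    ((continuousOn_exp_neg_integral hκ ht).mul
      ((hp₁.continuousOn.sub hp₂.continuousOn).mono (Ici_subset_Ici.2 ht))).mono
      Icc_subset_Ici_self
  have hcont' : ContinuousOn
      (fun u => -(Real.exp (-∫ τ in t..u, (c + β * p₁ τ + β * p₂ τ)) * (F₁ u - F₂ u)))
      (Icc t T) :=
    (((continuousOn_exp_neg_integral hκ ht).mul
      ((hF₁.sub hF₂).mono (Ici_subset_Ici.2 ht))).mono Icc_subset_Ici_self).neg
  have hFTC := intervalIntegral.integral_eq_sub_of_hasDerivAt_of_le htT hcont hderiv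
    (hcont'.intervalIntegrable_of_Icc htT)
  rw [intervalIntegral.integral_neg, intervalIntegral.integral_same, neg_zero, Real.exp_zero,
    one_mul] at hFTC
  linarith

theorem abs_sub_le (hβ : 0 ≤ β) (hkc : k < c)
    (hF : ∀ t ≥ 0, |F₁ t - F₂ t| ≤ ε * Real.exp (k * t)) {t : ℝ} (ht : 0 ≤ t) :
    |p₁ t - p₂ t| ≤ ε / (c - k) * Real.exp (k * t) := by
  have hκ : ContinuousOn (fun τ => c + β * p₁ τ + β * p₂ τ) (Ici 0) :=
    (continuousOn_rate hp₁.continuousOn).add (continuousOn_const.mul hp₂.continuousOn)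
  have hβp₁ : ∀ τ ≥ 0, 0 ≤ β * p₁ τ := fun τ hτ => mul_nonneg hβ (hp₁.nonneg τ hτ)
  have hβp₂ : ∀ τ ≥ 0, 0 ≤ β * p₂ τ := fun τ hτ => mul_nonneg hβ (hp₂.nonneg τ hτ)
  have htail : Tendsto (fun T => |Real.exp (-∫ τ in t..T, (c + β * p₁ τ + β * p₂ τ)) *
      (p₁ T - p₂ T)|) atTop (𝓝 0) := by
    have hlim := ((hp₁.tendsto_exp_neg_integral_mul hκ
      (fun τ hτ => by linarith [hβp₂ τ hτ]) ht).sub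
      (hp₂.tendsto_exp_neg_integral_mul hκ (fun τ hτ => by linarith [hβp₁ τ hτ]) ht)).abs
    simpa only [mul_sub, sub_zero, abs_zero] using hlim
  have hbound := htail.add_const (ε / (c - k) * Real.exp (k * t))
  rw [zero_add] at hbound
  refine ge_of_tendsto hbound ?_
  filter_upwards [eventually_ge_atTop t] with T hT
  rw [hp₁.sub_eq_exp_mul_add_integral hp₂ hF₁ hF₂ ht hT]
  have hcκ : ∀ τ ≥ 0, c ≤ c + β * p₁ τ + β * p₂ τ := fun τ hτ => by
    linarith [hβp₁ τ hτ, hβp₂ τ hτ]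
  exact (abs_add_le _ _).trans (add_le_add le_rfl
    (abs_integral_exp_neg_integral_mul_le hκ hcκ hkc (hF₁.sub hF₂) hF ht hT))

end Comparison

end IsRiccatiSolution

section PhiF

variable {c β W k η t : ℝ} {p p₁ p₂ : ℝ → ℝ}

theorem phiF_le (hp : ContinuousOn p (Ici 0)) (hp0 : ∀ τ ≥ 0, 0 ≤ p τ) (hβ : 0 ≤ β)
    (hη : 0 ≤ η) (hηt : η ≤ t) : phiF c β p t η ≤ Real.exp (-(c * (t - η))) :=
  exp_neg_integral_le (continuousOn_rate hp)
    (fun τ hτ => le_add_of_nonneg_right (mul_nonneg hβ (hp0 τ hτ))) hη hηt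

theorem abs_phiF_sub_phiF_le (hp₁ : ContinuousOn p₁ (Ici 0)) (hp₁0 : ∀ τ ≥ 0, 0 ≤ p₁ τ)
    (hp₂ : ContinuousOn p₂ (Ici 0)) (hp₂0 : ∀ τ ≥ 0, 0 ≤ p₂ τ) (hβ : 0 ≤ β) (hk : 0 < k)
    (hW : ∀ τ ≥ 0, |p₁ τ - p₂ τ| ≤ W * Real.exp (k * τ)) (hη : 0 ≤ η) (hηt : η ≤ t) :
    |phiF c β p₁ t η - phiF c β p₂ t η| ≤
      Real.exp (-(c * (t - η))) * (β * W / k * Real.exp (k * t)) := by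
  calc |phiF c β p₁ t η - phiF c β p₂ t η|
      ≤ Real.exp (-(c * (t - η))) * |∫ τ in η..t, (c + β * p₁ τ - (c + β * p₂ τ))| :=
        abs_exp_neg_integral_sub_le (continuousOn_rate hp₁) (continuousOn_rate hp₂)
          (fun τ hτ => le_add_of_nonneg_right (mul_nonneg hβ (hp₁0 τ hτ)))
          (fun τ hτ => le_add_of_nonneg_right (mul_nonneg hβ (hp₂0 τ hτ))) hη hηt
    _ ≤ Real.exp (-(c * (t - η))) * (β * W / k * Real.exp (k * t)) := by
        refine mul_le_mul_of_nonneg_left (abs_integral_le_div_mul_exp hk hηt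
          (intervalIntegrable_of_continuousOn_Ici
            ((continuousOn_rate hp₁).sub (continuousOn_rate hp₂)) hη (hη.trans hηt))
          fun τ hτ => ?_) (Real.exp_pos _).le
        rw [show c + β * p₁ τ - (c + β * p₂ τ) = β * (p₁ τ - p₂ τ) by ring, abs_mul,
          abs_of_nonneg hβ, mul_assoc]
        exact mul_le_mul_of_nonneg_left (hW τ (hη.trans hτ.1)) hβ

theorem integrableOn_phiF_Ioi (hp : ContinuousOn p (Ici 0)) (hp0 : ∀ τ ≥ 0, 0 ≤ p τ)
    (hβ : 0 ≤ β) (hc : 0 < c) (hη : 0 ≤ η) :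
    IntegrableOn (fun τ => phiF c β p τ η) (Ioi η) :=
  integrableOn_exp_neg_integral (continuousOn_rate hp) hc
    (fun τ hτ => le_add_of_nonneg_right (mul_nonneg hβ (hp0 τ hτ))) hη

theorem setIntegral_phiF_nonneg : 0 ≤ ∫ τ in Ioi η, phiF c β p τ η :=
  setIntegral_nonneg measurableSet_Ioi fun _ _ => (Real.exp_pos _).le

theorem setIntegral_phiF_le (hp : ContinuousOn p (Ici 0)) (hp0 : ∀ τ ≥ 0, 0 ≤ p τ)
    (hβ : 0 ≤ β) (hc : 0 < c) (hη : 0 ≤ η) : ∫ τ in Ioi η, phiF c β p τ η ≤ 1 / c := by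
  rw [← integral_exp_neg_mul_sub hc η]
  exact setIntegral_mono_on (integrableOn_phiF_Ioi hp hp0 hβ hc hη)
    (integrableOn_exp_neg_mul_sub hc η) measurableSet_Ioi
    fun τ hτ => phiF_le hp hp0 hβ hη (le_of_lt hτ)

theorem continuousOn_setIntegral_phiF (hp : ContinuousOn p (Ici 0)) (hp0 : ∀ τ ≥ 0, 0 ≤ p τ)
    (hβ : 0 ≤ β) (hc : 0 < c) :
    ContinuousOn (fun η => ∫ τ in Ioi η, phiF c β p τ η) (Ici 0) := by
  have hint := integrableOn_phiF_Ioi hp hp0 hβ hc le_rfl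
  refine (continuousOn_backwardIntegral (F := fun _ => 1) (continuousOn_rate hp)
    (by simp only [mul_one]; exact hint) continuousOn_const).congr fun η _ => ?_
  simp only [backwardIntegral, mul_one]
  rfl

theorem continuousOn_phiF_start (hp : ContinuousOn p (Ici 0)) :
    ContinuousOn (fun η => phiF c β p t η) (Icc 0 t) := by
  have hrate := continuousOn_rate (c := c) (β := β) hp
  refine ContinuousOn.congr (f := fun η => Real.exp (-((∫ τ in (0 : ℝ)..t, (c + β * p τ)) -
    ∫ τ in (0 : ℝ)..η, (c + β * p τ)))) ?_ fun η hη => ?_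
  · exact (continuousOn_const.sub ((continuousOn_primitive_Ici hrate).mono
      Icc_subset_Ici_self)).neg.rexp
  · beta_reduce
    rw [phiF, intervalIntegral.integral_interval_sub_left
      (intervalIntegrable_of_continuousOn_Ici hrate le_rfl (hη.1.trans hη.2))
      (intervalIntegrable_of_continuousOn_Ici hrate le_rfl hη.1)]

end PhiF

noncomputable def mopTerm (a δ β C z xbar0 : ℝ) (p : ℝ → ℝ) (t : ℝ) : ℝ :=
  z + phiF a β p t 0 * (xbar0 - z) +
    C * (xbar0 - z) * ∫ η in (0 : ℝ)..t, phiF a β p t η * (∫ τ in Ioi η, psiF a δ β p τ η)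

noncomputable def mopTermLipschitzConst (a δ β C z xbar0 k : ℝ) : ℝ :=
  β / k * (|xbar0 - z| + |C * (xbar0 - z)| * (1 / (a + δ) + 1 / (a + δ - k)) / a)

section MopTerm

variable {a δ c β W k η t : ℝ} {p₁ p₂ : ℝ → ℝ}
  (hp₁ : ContinuousOn p₁ (Ici 0)) (hp₁0 : ∀ τ ≥ 0, 0 ≤ p₁ τ)
  (hp₂ : ContinuousOn p₂ (Ici 0)) (hp₂0 : ∀ τ ≥ 0, 0 ≤ p₂ τ) (hβ : 0 ≤ β) (hk : 0 < k)
  (hW : ∀ τ ≥ 0, |p₁ τ - p₂ τ| ≤ W * Real.exp (k * τ))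
include hp₁ hp₁0 hp₂ hp₂0 hβ hk hW

theorem abs_setIntegral_phiF_sub_le (hkc : k < c) (hη : 0 ≤ η) :
    |(∫ τ in Ioi η, phiF c β p₁ τ η) - ∫ τ in Ioi η, phiF c β p₂ τ η| ≤
      β * W / k / (c - k) * Real.exp (k * η) := by
  have hck : 0 < c - k := sub_pos.2 hkc
  have hint₁ := integrableOn_phiF_Ioi hp₁ hp₁0 hβ (hk.trans hkc) hη
  have hint₂ := integrableOn_phiF_Ioi hp₂ hp₂0 hβ (hk.trans hkc) hη
  rw [← integral_sub hint₁ hint₂]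
  calc |∫ τ in Ioi η, (phiF c β p₁ τ η - phiF c β p₂ τ η)|
      ≤ ∫ τ in Ioi η, |phiF c β p₁ τ η - phiF c β p₂ τ η| :=
        abs_integral_le_integral_abs
    _ ≤ ∫ τ in Ioi η, β * W / k * Real.exp (k * η) * Real.exp (-((c - k) * (τ - η))) := by
        refine setIntegral_mono_on (hint₁.sub hint₂).abs
          ((integrableOn_exp_neg_mul_sub hck η).const_mul _) measurableSet_Ioi fun τ hτ => ?_
        refine (abs_phiF_sub_phiF_le hp₁ hp₁0 hp₂ hp₂0 hβ hk hW hη (le_of_lt hτ)).trans_eq ?_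
        rw [mul_left_comm, mul_assoc, ← Real.exp_add, ← Real.exp_add]
        ring_nf
    _ = β * W / k / (c - k) * Real.exp (k * η) := by
        rw [integral_const_mul, integral_exp_neg_mul_sub hck]
        ring

theorem abs_phiF_mul_sub_le (hkδ : k < a + δ) (hη : 0 ≤ η) (hηt : η ≤ t) :
    |phiF a β p₁ t η * (∫ τ in Ioi η, psiF a δ β p₁ τ η) -
        phiF a β p₂ t η * (∫ τ in Ioi η, psiF a δ β p₂ τ η)| ≤
      β * W / k * (1 / (a + δ) + 1 / (a + δ - k)) * Real.exp (k * t) *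
        Real.exp (-(a * (t - η))) := by
  have hW0 : 0 ≤ W := nonneg_of_abs_le_mul_exp (hW 0 le_rfl)
  have hΨ₁ : ∫ τ in Ioi η, psiF a δ β p₁ τ η ≤ 1 / (a + δ) :=
    setIntegral_phiF_le hp₁ hp₁0 hβ (hk.trans hkδ) hη
  have hΨ : |(∫ τ in Ioi η, psiF a δ β p₁ τ η) - ∫ τ in Ioi η, psiF a δ β p₂ τ η| ≤
      β * W / k / (a + δ - k) * Real.exp (k * η) :=
    abs_setIntegral_phiF_sub_le hp₁ hp₁0 hp₂ hp₂0 hβ hk hW hkδ hη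
  have hφ := abs_phiF_sub_phiF_le (c := a) hp₁ hp₁0 hp₂ hp₂0 hβ hk hW hη hηt
  have hφ₂ : phiF a β p₂ t η ≤ Real.exp (-(a * (t - η))) := phiF_le hp₂ hp₂0 hβ hη hηt
  have hΨ₁0 : 0 ≤ ∫ τ in Ioi η, psiF a δ β p₁ τ η := setIntegral_phiF_nonneg
  have hφ₂0 : 0 ≤ phiF a β p₂ t η := (Real.exp_pos _).le
  have hkη : Real.exp (k * η) ≤ Real.exp (k * t) := by gcongr
  have hcoeff : 0 ≤ β * W / k / (a + δ - k) := div_nonneg (by positivity) (by linarith)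
  calc _ = |(phiF a β p₁ t η - phiF a β p₂ t η) * (∫ τ in Ioi η, psiF a δ β p₁ τ η) +
          phiF a β p₂ t η * ((∫ τ in Ioi η, psiF a δ β p₁ τ η) -
            ∫ τ in Ioi η, psiF a δ β p₂ τ η)| := by ring_nf
    _ ≤ |phiF a β p₁ t η - phiF a β p₂ t η| * (∫ τ in Ioi η, psiF a δ β p₁ τ η) +
          phiF a β p₂ t η * |(∫ τ in Ioi η, psiF a δ β p₁ τ η) -
            ∫ τ in Ioi η, psiF a δ β p₂ τ η| := by
        refine (abs_add_le _ _).trans_eq ?_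
        rw [abs_mul, abs_mul, abs_of_nonneg hΨ₁0, abs_of_nonneg hφ₂0]
    _ ≤ Real.exp (-(a * (t - η))) * (β * W / k * Real.exp (k * t)) * (1 / (a + δ)) +
          Real.exp (-(a * (t - η))) * (β * W / k / (a + δ - k) * Real.exp (k * t)) := by
        exact add_le_add (mul_le_mul hφ hΨ₁ hΨ₁0 (by positivity))
          (mul_le_mul hφ₂ (hΨ.trans (mul_le_mul_of_nonneg_left hkη hcoeff)) (abs_nonneg _)
            (Real.exp_pos _).le)
    _ = _ := by ring

theorem abs_integral_phiF_mul_sub_le (ha : 0 < a) (hkδ : k < a + δ) (ht : 0 ≤ t) :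
    |(∫ η in (0 : ℝ)..t, phiF a β p₁ t η * (∫ τ in Ioi η, psiF a δ β p₁ τ η)) -
        ∫ η in (0 : ℝ)..t, phiF a β p₂ t η * (∫ τ in Ioi η, psiF a δ β p₂ τ η)| ≤
      β * W / k * (1 / (a + δ) + 1 / (a + δ - k)) * Real.exp (k * t) / a := by
  have hW0 : 0 ≤ W := nonneg_of_abs_le_mul_exp (hW 0 le_rfl)
  have hcont₁ : ContinuousOn
      (fun η => phiF a β p₁ t η * (∫ τ in Ioi η, psiF a δ β p₁ τ η)) (Icc 0 t) :=
    (continuousOn_phiF_start hp₁).mul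
      ((continuousOn_setIntegral_phiF hp₁ hp₁0 hβ (hk.trans hkδ)).mono Icc_subset_Ici_self)
  have hcont₂ : ContinuousOn
      (fun η => phiF a β p₂ t η * (∫ τ in Ioi η, psiF a δ β p₂ τ η)) (Icc 0 t) :=
    (continuousOn_phiF_start hp₂).mul
      ((continuousOn_setIntegral_phiF hp₂ hp₂0 hβ (hk.trans hkδ)).mono Icc_subset_Ici_self)
  rw [← intervalIntegral.integral_sub (hcont₁.intervalIntegrable_of_Icc ht)
    (hcont₂.intervalIntegrable_of_Icc ht)]
  refine (intervalIntegral.abs_integral_le_integral_abs ht).trans ?_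
  refine (intervalIntegral.integral_mono_on ht
    ((hcont₁.sub hcont₂).abs.intervalIntegrable_of_Icc ht)
    (Continuous.intervalIntegrable (by fun_prop) _ _)
    fun η hη => abs_phiF_mul_sub_le hp₁ hp₁0 hp₂ hp₂0 hβ hk hW hkδ hη.1 hη.2).trans ?_
  have hS : 0 ≤ 1 / (a + δ) + 1 / (a + δ - k) :=
    add_nonneg (one_div_nonneg.2 (by linarith)) (one_div_nonneg.2 (by linarith))
  rw [intervalIntegral.integral_const_mul, mul_div_assoc, ← mul_one_div _ a]
  exact mul_le_mul_of_nonneg_left (integral_exp_neg_mul_sub_le ha 0 t) (by positivity)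

theorem abs_mopTerm_sub_le (ha : 0 < a) (hkδ : k < a + δ) (C z xbar0 : ℝ) (ht : 0 ≤ t) :
    Real.exp (-k * t) * |mopTerm a δ β C z xbar0 p₁ t - mopTerm a δ β C z xbar0 p₂ t| ≤
      W * mopTermLipschitzConst a δ β C z xbar0 k := by
  have hW0 : 0 ≤ W := nonneg_of_abs_le_mul_exp (hW 0 le_rfl)
  have hφ : |phiF a β p₁ t 0 - phiF a β p₂ t 0| ≤ β * W / k * Real.exp (k * t) := by
    refine (abs_phiF_sub_phiF_le hp₁ hp₁0 hp₂ hp₂0 hβ hk hW le_rfl ht).trans ?_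
    exact mul_le_of_le_one_left (by positivity) (Real.exp_le_one_iff.2 (by nlinarith))
  have hI := abs_integral_phiF_mul_sub_le hp₁ hp₁0 hp₂ hp₂0 hβ hk hW ha hkδ ht
  have hdiff : |mopTerm a δ β C z xbar0 p₁ t - mopTerm a δ β C z xbar0 p₂ t| ≤
      Real.exp (k * t) * (W * mopTermLipschitzConst a δ β C z xbar0 k) := by
    rw [mopTerm, mopTerm, show ∀ A₁ A₂ I₁ I₂ : ℝ,
        z + A₁ * (xbar0 - z) + C * (xbar0 - z) * I₁ - (z + A₂ * (xbar0 - z) + C * (xbar0 - z) * I₂)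
          = (A₁ - A₂) * (xbar0 - z) + C * (xbar0 - z) * (I₁ - I₂) by intros; ring]
    refine (abs_add_le _ _).trans ?_
    rw [abs_mul, abs_mul (C * (xbar0 - z))]
    calc _ ≤ β * W / k * Real.exp (k * t) * |xbar0 - z| + |C * (xbar0 - z)| *
          (β * W / k * (1 / (a + δ) + 1 / (a + δ - k)) * Real.exp (k * t) / a) := by
          gcongr
      _ = _ := by rw [mopTermLipschitzConst]; ring
  calc _ ≤ Real.exp (-k * t) *
        (Real.exp (k * t) * (W * mopTermLipschitzConst a δ β C z xbar0 k)) :=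
        mul_le_mul_of_nonneg_left hdiff (Real.exp_pos _).le
    _ = _ := by rw [← mul_assoc, ← Real.exp_add, neg_mul, neg_add_cancel, Real.exp_zero, one_mul]

end MopTerm

section WeightedNorm

variable {k : ℝ} {f : ℝ → ℝ}

theorem bddAbove_normk {C : ℝ} (hk : 0 ≤ k) (hf : ∀ t ≥ 0, |f t| ≤ C) :
    BddAbove ((fun t => Real.exp (-k * t) * |f t|) '' Ici 0) := by
  refine ⟨C, forall_mem_image.2 fun t ht => ?_⟩
  have hexp : Real.exp (-k * t) ≤ 1 := Real.exp_le_one_iff.2 (by nlinarith [mem_Ici.1 ht])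
  exact (mul_le_of_le_one_left (abs_nonneg _) hexp).trans (hf t ht)

theorem abs_le_normk_mul_exp (hbdd : BddAbove ((fun t => Real.exp (-k * t) * |f t|) '' Ici 0))
    {t : ℝ} (ht : 0 ≤ t) : |f t| ≤ normk k f * Real.exp (k * t) := by
  have hle : Real.exp (-k * t) * |f t| ≤ normk k f := le_csSup hbdd ⟨t, ht, rfl⟩
  calc |f t| = Real.exp (-k * t) * |f t| * Real.exp (k * t) := by
        rw [mul_comm, ← mul_assoc, ← Real.exp_add, neg_mul, add_neg_cancel, Real.exp_zero, one_mul]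
    _ ≤ normk k f * Real.exp (k * t) := mul_le_mul_of_nonneg_right hle (Real.exp_pos _).le

theorem normk_nonneg (hbdd : BddAbove ((fun t => Real.exp (-k * t) * |f t|) '' Ici 0)) :
    0 ≤ normk k f :=
  (mul_nonneg (Real.exp_pos _).le (abs_nonneg _)).trans (le_csSup hbdd ⟨0, mem_Ici.2 le_rfl, rfl⟩)

theorem normk_le {C : ℝ} (h : ∀ t ≥ 0, Real.exp (-k * t) * |f t| ≤ C) : normk k f ≤ C :=
  csSup_le ((nonempty_Ici).image _) (forall_mem_image.2 h)

theorem normk_sum_mul_sub_le {m : ℕ} {B : ℝ} {n R : Fin m → ℝ} {u v : Fin m → ℝ → ℝ}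
    (h : ∀ s, ∀ t ≥ 0, Real.exp (-k * t) * |u s t - v s t| ≤ B * R s) :
    normk k (fun t => ∑ s, n s * u s t - ∑ s, n s * v s t) ≤ B * ∑ s, |n s| * R s := by
  refine normk_le fun t ht => ?_
  rw [← Finset.sum_sub_distrib, Finset.mul_sum]
  calc Real.exp (-k * t) * |∑ s, (n s * u s t - n s * v s t)|
      ≤ Real.exp (-k * t) * ∑ s, |n s| * |u s t - v s t| := by
        refine mul_le_mul_of_nonneg_left ((Finset.abs_sum_le_sum_abs _ _).trans_eq ?_)
          (Real.exp_pos _).le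
        simp only [← mul_sub, abs_mul]
    _ = ∑ s, |n s| * (Real.exp (-k * t) * |u s t - v s t|) := by
        rw [Finset.mul_sum]; simp only [mul_left_comm]
    _ ≤ ∑ s, B * (|n s| * R s) := Finset.sum_le_sum fun s _ => by
        rw [mul_left_comm B]; exact mul_le_mul_of_nonneg_left (h s t ht) (abs_nonneg _)

end WeightedNorm

section CostTrajectory

variable {g : ℝ → ℝ} {y z xbar0 : ℝ} {x x₁ x₂ : ℝ → ℝ}

theorem abs_sub_le_of_mem_Gset (hx₁ : x₁ ∈ Gset z xbar0) (hx₂ : x₂ ∈ Gset z xbar0) {t : ℝ}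
    (ht : 0 ≤ t) : |(x₁ - x₂) t| ≤ xbar0 - z :=
  abs_sub_le_iff.2 ⟨by linarith [(hx₁.2 t ht).2, (hx₂.2 t ht).1],
    by linarith [(hx₁.2 t ht).1, (hx₂.2 t ht).2]⟩

theorem continuousOn_Δop (hg : Continuous g) (hx : ContinuousOn x (Ici 0)) :
    ContinuousOn (Δop g y x) (Ici 0) :=
  (continuousOn_primitive_Ici (hg.comp_continuousOn (hx.sub continuousOn_const))).abs

theorem abs_Δop_sub_le {lam k N : ℝ} (hg : Continuous g) (hlam : 0 ≤ lam) (hk : 0 < k)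
    (hglip : ∀ u ∈ Icc (z - y) (xbar0 - y), ∀ v ∈ Icc (z - y) (xbar0 - y),
      |g u - g v| ≤ lam * |u - v|)
    (hx₁ : x₁ ∈ Gset z xbar0) (hx₂ : x₂ ∈ Gset z xbar0)
    (hN : ∀ t ≥ 0, |x₁ t - x₂ t| ≤ N * Real.exp (k * t)) {t : ℝ} (ht : 0 ≤ t) :
    |Δop g y x₁ t - Δop g y x₂ t| ≤ lam * N / k * Real.exp (k * t) := by
  have hint : ∀ x ∈ Gset z xbar0, IntervalIntegrable (fun τ => g (x τ - y)) volume 0 t :=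
    fun x hx => intervalIntegrable_of_continuousOn_Ici
      (hg.comp_continuousOn (hx.1.sub continuousOn_const)) le_rfl ht
  refine (abs_abs_sub_abs_le_abs_sub _ _).trans ?_
  rw [← intervalIntegral.integral_sub (hint x₁ hx₁) (hint x₂ hx₂)]
  refine abs_integral_le_div_mul_exp hk ht ((hint x₁ hx₁).sub (hint x₂ hx₂)) fun τ hτ => ?_
  have hmem : ∀ x ∈ Gset z xbar0, x τ - y ∈ Icc (z - y) (xbar0 - y) := fun x hx =>
    ⟨by linarith [(hx.2 τ hτ.1).1], by linarith [(hx.2 τ hτ.1).2]⟩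
  calc |g (x₁ τ - y) - g (x₂ τ - y)| ≤ lam * |x₁ τ - y - (x₂ τ - y)| :=
        hglip _ (hmem x₁ hx₁) _ (hmem x₂ hx₂)
    _ ≤ lam * (N * Real.exp (k * τ)) := by
        rw [sub_sub_sub_cancel_right]; exact mul_le_mul_of_nonneg_left (hN τ hτ.1) hlam
    _ = lam * N * Real.exp (k * τ) := by ring

end CostTrajectory

end MFG

open MFG in
theorem Mop_weighted_norm_lipschitz_general (m : ℕ)
    (a b n : Fin m → ℝ) (δ r qx0 z y xbar0 k lam : ℝ)
    (ha : ∀ s, 0 < a s)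
    (hr : 0 < r)
    (hk : 0 < k) (hka : ∀ s, k < a s + δ)
    (g : ℝ → ℝ) (hgc : Continuous g)
    (hlam : 0 ≤ lam)
    (hglip : ∀ u ∈ Set.Icc (z - y) (xbar0 - y), ∀ v ∈ Set.Icc (z - y) (xbar0 - y),
      |g u - g v| ≤ lam * |u - v|)
    (π : Fin m → (ℝ → ℝ) → ℝ → ℝ)
    (hπ : ∀ s, ∀ x ∈ Gset z xbar0,
      ContinuousOn (π s x) (Set.Ici 0) ∧
      (∀ t ≥ (0 : ℝ), 0 ≤ π s x t) ∧
      (∀ t ≥ (0 : ℝ), IntegrableOn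
        (fun η => Real.exp
            (-(∫ τ in t..η, (2 * a s + δ + ((b s) ^ 2 / r) * π s x τ))) *
          (Δop g y x η + qx0)) (Set.Ioi t)) ∧
      (∀ t ≥ (0 : ℝ), π s x t = ∫ η in Set.Ioi t,
        Real.exp (-(∫ τ in t..η, (2 * a s + δ + ((b s) ^ 2 / r) * π s x τ))) *
          (Δop g y x η + qx0))) :
    ∃ R > (0 : ℝ), ∀ xbar' ∈ Gset z xbar0, ∀ xbar'' ∈ Gset z xbar0,
      normk k (Mop m a b n δ r qx0 z xbar0 π xbar' -
          Mop m a b n δ r qx0 z xbar0 π xbar'')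
        ≤ lam * R * normk k (xbar' - xbar'') := by
  set R : Fin m → ℝ := fun s => mopTermLipschitzConst (a s) δ ((b s) ^ 2 / r)
    (((b s) ^ 2 / r) * qx0 + (a s) ^ 2 + (a s) * δ) z xbar0 k / k / (2 * a s + δ - k)
  refine ⟨max 1 (∑ s, |n s| * R s), lt_max_of_lt_left one_pos, fun x₁ hx₁ x₂ hx₂ => ?_⟩
  have hsol : ∀ s, ∀ x ∈ Gset z xbar0, IsRiccatiSolution (2 * a s + δ) ((b s) ^ 2 / r)
      (fun η => Δop g y x η + qx0) (π s x) := fun s x hx =>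
    ⟨(hπ s x hx).1, (hπ s x hx).2.1, (hπ s x hx).2.2.1 0 le_rfl, (hπ s x hx).2.2.2⟩
  have hβ : ∀ s, 0 ≤ (b s) ^ 2 / r := fun s => div_nonneg (sq_nonneg _) hr.le
  have hbdd := bddAbove_normk hk.le fun t ht => abs_sub_le_of_mem_Gset hx₁ hx₂ ht
  set N := normk k (x₁ - x₂)
  have hΔ : ∀ t ≥ 0, |(Δop g y x₁ t + qx0) - (Δop g y x₂ t + qx0)| ≤
      lam * N / k * Real.exp (k * t) := fun t ht => by
    rw [add_sub_add_right_eq_sub]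
    exact abs_Δop_sub_le hgc hlam hk hglip hx₁ hx₂ (fun τ hτ => abs_le_normk_mul_exp hbdd hτ) ht
  have hπdiff : ∀ s, ∀ t ≥ 0, |π s x₁ t - π s x₂ t| ≤
      lam * N / k / (2 * a s + δ - k) * Real.exp (k * t) := fun s t ht =>
    (hsol s x₁ hx₁).abs_sub_le (hsol s x₂ hx₂) ((continuousOn_Δop hgc hx₁.1).add continuousOn_const)
      ((continuousOn_Δop hgc hx₂.1).add continuousOn_const) (hβ s)
      (by linarith [ha s, hka s]) hΔ ht
  -- `Mop` unfolds to `∑ s, n s * mopTerm …`, the shape `normk_sum_mul_sub_le` expects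
  refine (normk_sum_mul_sub_le (B := lam * N) (n := n) (R := R) fun s t ht =>
    (abs_mopTerm_sub_le (hsol s x₁ hx₁).continuousOn (hsol s x₁ hx₁).nonneg
      (hsol s x₂ hx₂).continuousOn (hsol s x₂ hx₂).nonneg (hβ s) hk (hπdiff s) (ha s) (hka s)
      _ z xbar0 ht).trans_eq ?_).trans ?_
  · ring
  · have := mul_le_mul_of_nonneg_left (le_max_right 1 (∑ s, |n s| * R s))
      (mul_nonneg hlam (normk_nonneg hbdd))
    linarith

/-- Weighted-norm Lipschitz estimate for the mean-field operator `M`: for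
`0 < k < min_s aˢ + δ` there is `R_k > 0` such that
`‖M(x̄') − M(x̄'')‖_k ≤ λ R_k ‖x̄' − x̄''‖_k` for all `x̄', x̄'' ∈ G`, where `λ` is
the Lipschitz constant of `g` on `[z − y, x̄₀ − y]`. -/
theorem Mop_weighted_norm_lipschitz (m : ℕ) (hm : 0 < m)
    (a b n : Fin m → ℝ) (δ r qx0 z y xbar0 k lam : ℝ)
    (ha : ∀ s, 0 < a s) (hb : ∀ s, 0 < b s) (hn : ∀ s, 0 < n s)
    (hnsum : ∑ s : Fin m, n s = 1)
    (hδ : 0 < δ) (hr : 0 < r) (hqx0 : 0 < qx0)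
    (hzy : z < y) (hyx : y < xbar0)
    (hk : 0 < k) (hka : ∀ s, k < a s + δ)
    (g : ℝ → ℝ) (hgc : Continuous g) (hgmono : StrictMono g)
    (hggrow : ∃ C > (0 : ℝ), ∀ x : ℝ, |g x| ≤ C * (1 + |x|))
    (hlam : 0 ≤ lam)
    (hglip : ∀ u ∈ Set.Icc (z - y) (xbar0 - y), ∀ v ∈ Set.Icc (z - y) (xbar0 - y),
      |g u - g v| ≤ lam * |u - v|)
    (π : Fin m → (ℝ → ℝ) → ℝ → ℝ)
    (hπ : ∀ s, ∀ x ∈ Gset z xbar0,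
      ContinuousOn (π s x) (Set.Ici 0) ∧
      (∀ t ≥ (0 : ℝ), 0 ≤ π s x t) ∧
      (∀ t ≥ (0 : ℝ), IntegrableOn
        (fun η => Real.exp
            (-(∫ τ in t..η, (2 * a s + δ + ((b s) ^ 2 / r) * π s x τ))) *
          (Δop g y x η + qx0)) (Set.Ioi t)) ∧
      (∀ t ≥ (0 : ℝ), π s x t = ∫ η in Set.Ioi t,
        Real.exp (-(∫ τ in t..η, (2 * a s + δ + ((b s) ^ 2 / r) * π s x τ))) *
          (Δop g y x η + qx0))) :
    ∃ R > (0 : ℝ), ∀ xbar' ∈ Gset z xbar0, ∀ xbar'' ∈ Gset z xbar0,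
      normk k (Mop m a b n δ r qx0 z xbar0 π xbar' -
          Mop m a b n δ r qx0 z xbar0 π xbar'')
        ≤ lam * R * normk k (xbar' - xbar'') :=
  Mop_weighted_norm_lipschitz_general m a b n δ r qx0 z y xbar0 k lam ha hr hk hka g hgc hlam hglip
    π hπ
end

section
/- Let k > 0, let z ≤ x̄₀ and y be reals, and let g : ℝ → ℝ be Lipschitz continuous with constant λ on the interval [z − y, x̄₀ − y]. Then for all continuous x̄, x̄' : [0,∞) → ℝ taking values in [z, x̄₀] and all t ≥ 0, e^{-kt} · | |∫₀ᵗ g(x̄(τ) − y) dτ| − |∫₀ᵗ g(x̄'(τ) − y) dτ| | ≤ (λ/k) · sup_{τ≥0} e^{-kτ}|x̄(τ) − x̄'(τ)|. -/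
/-!
Since `g` is `λ`-Lipschitz and both trajectories stay in `[z, x̄₀]`, the integrands differ at
time `τ` by at most `λ |x̄ τ - x̄' τ| ≤ λ e^{kτ} ‖x̄ - x̄'‖_k`. Integrating over `[0, t]` gives at
most `λ ‖x̄ - x̄'‖_k (e^{kt} - 1) / k`, and the weight `e^{-kt}` brings this below
`(λ / k) ‖x̄ - x̄'‖_k`.
The outer absolute values only help, by the reverse triangle inequality.
-/

open Real Set MeasureTheory intervalIntegral

/-- The norm `‖f‖_k`; as an `sSup` of reals it is `0` when the weighted values are unbounded. -/
noncomputable def weightedSupNorm (k : ℝ) (f : ℝ → ℝ) : ℝ :=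
  sSup {v : ℝ | ∃ τ ≥ (0 : ℝ), v = exp (-k * τ) * |f τ|}

theorem abs_le_exp_mul_weightedSupNorm {k C : ℝ} {f : ℝ → ℝ} (hk : 0 ≤ k)
    (hC : ∀ τ ≥ (0 : ℝ), |f τ| ≤ C) {τ : ℝ} (hτ : 0 ≤ τ) :
    |f τ| ≤ exp (k * τ) * weightedSupNorm k f := by
  have hbdd : BddAbove {v : ℝ | ∃ τ ≥ (0 : ℝ), v = exp (-k * τ) * |f τ|} := by
    refine ⟨C, fun _ ⟨σ, hσ, hv⟩ => hv ▸ ?_⟩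
    calc exp (-k * σ) * |f σ| ≤ 1 * C := by
          gcongr
          · exact exp_le_one_iff.mpr (by nlinarith)
          · exact hC σ hσ
      _ = C := one_mul C
  have hweighted : exp (-k * τ) * |f τ| ≤ weightedSupNorm k f := le_csSup hbdd ⟨τ, hτ, rfl⟩
  calc |f τ| = exp (k * τ) * (exp (-k * τ) * |f τ|) := by
        rw [← mul_assoc, ← exp_add]; simp
    _ ≤ exp (k * τ) * weightedSupNorm k f := by gcongr

theorem integral_exp_mul {k : ℝ} (hk : k ≠ 0) (a b : ℝ) :
    ∫ τ in a..b, exp (k * τ) = (exp (k * b) - exp (k * a)) / k := by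
  rw [intervalIntegral.integral_comp_mul_left exp hk, integral_exp, smul_eq_mul, inv_mul_eq_div]

theorem exp_neg_mul_abs_integral_le {k C t : ℝ} {f : ℝ → ℝ} (hk : 0 < k) (ht : 0 ≤ t)
    (hf : ∀ τ ∈ Icc 0 t, |f τ| ≤ C * exp (k * τ)) :
    exp (-k * t) * |∫ τ in 0..t, f τ| ≤ C / k := by
  have hC : 0 ≤ C := by simpa using (abs_nonneg (f 0)).trans (hf 0 ⟨le_rfl, ht⟩)
  have hint : |∫ τ in 0..t, f τ| ≤ C * ((exp (k * t) - 1) / k) := by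
    calc |∫ τ in 0..t, f τ| ≤ ∫ τ in 0..t, C * exp (k * τ) := by
          simpa only [Real.norm_eq_abs] using norm_integral_le_of_norm_le (f := f) ht
            (ae_of_all _ fun τ hτ => hf τ (Ioc_subset_Icc_self hτ))
            ((by fun_prop : Continuous fun τ => C * exp (k * τ)).intervalIntegrable 0 t)
      _ = C * ((exp (k * t) - 1) / k) := by
          rw [intervalIntegral.integral_const_mul, integral_exp_mul hk.ne', mul_zero, exp_zero]
  calc exp (-k * t) * |∫ τ in 0..t, f τ| ≤ exp (-k * t) * (C * ((exp (k * t) - 1) / k)) := by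
        gcongr
    _ = C * (1 - exp (-k * t)) / k := by
        have he : exp (-k * t) * exp (k * t) = 1 := by rw [← exp_add]; simp
        linear_combination (C / k) * he
    _ ≤ C / k := by
        gcongr
        exact mul_le_of_le_one_right hC (by linarith [exp_pos (-k * t)])

theorem intervalIntegrable_comp_of_mapsTo {g u : ℝ → ℝ} {s : Set ℝ} {t : ℝ}
    (hg : ContinuousOn g s) (hu : ContinuousOn u (Ici 0)) (hus : ∀ τ ≥ (0 : ℝ), u τ ∈ s)
    (ht : 0 ≤ t) : IntervalIntegrable (fun τ => g (u τ)) volume 0 t :=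
  ContinuousOn.intervalIntegrable <| (hg.comp hu fun τ hτ => hus τ hτ).mono <| by
    rw [uIcc_of_le ht]; exact Icc_subset_Ici_self

theorem cost_coefficient_weighted_lipschitz_general (k z xbar0 y lam : ℝ)
    (hk : 0 < k) (hlam : 0 ≤ lam) (g : ℝ → ℝ)
    (hglip : ∀ u ∈ Set.Icc (z - y) (xbar0 - y),
      ∀ v ∈ Set.Icc (z - y) (xbar0 - y), |g u - g v| ≤ lam * |u - v|) :
    ∀ xbar xbar' : ℝ → ℝ,
      ContinuousOn xbar (Set.Ici 0) → ContinuousOn xbar' (Set.Ici 0) →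
      (∀ t ≥ (0 : ℝ), xbar t ∈ Set.Icc z xbar0) →
      (∀ t ≥ (0 : ℝ), xbar' t ∈ Set.Icc z xbar0) →
      ∀ t ≥ (0 : ℝ),
        Real.exp (-k * t) *
          abs (|∫ τ in (0 : ℝ)..t, g (xbar τ - y)| -
            |∫ τ in (0 : ℝ)..t, g (xbar' τ - y)|)
        ≤ (lam / k) *
            sSup {v : ℝ | ∃ τ ≥ (0 : ℝ),
              v = Real.exp (-k * τ) * |xbar τ - xbar' τ|} := by
  intro xbar xbar' hc hc' hmem hmem' t ht
  have hshift : ∀ x : ℝ → ℝ, (∀ τ ≥ (0 : ℝ), x τ ∈ Icc z xbar0) →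
      ∀ τ ≥ (0 : ℝ), x τ - y ∈ Icc (z - y) (xbar0 - y) :=
    fun x hx τ hτ => sub_mem_Icc_iff_left.mpr (by simpa using hx τ hτ)
  have hg : ContinuousOn g (Icc (z - y) (xbar0 - y)) :=
    (LipschitzOnWith.of_dist_le' fun u hu v hv => by
      simpa only [Real.dist_eq] using hglip u hu v hv).continuousOn
  have hint : ∀ x : ℝ → ℝ, ContinuousOn x (Ici 0) → (∀ τ ≥ (0 : ℝ), x τ ∈ Icc z xbar0) →
      IntervalIntegrable (fun τ => g (x τ - y)) volume 0 t := fun x hx hxI =>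
    intervalIntegrable_comp_of_mapsTo hg (hx.sub continuousOn_const) (hshift x hxI) ht
  have hpointwise : ∀ τ ∈ Icc 0 t, |g (xbar τ - y) - g (xbar' τ - y)| ≤
      lam * weightedSupNorm k (fun τ => xbar τ - xbar' τ) * exp (k * τ) := fun τ hτ =>
    calc |g (xbar τ - y) - g (xbar' τ - y)| ≤ lam * |xbar τ - xbar' τ| := by
          simpa only [sub_sub_sub_cancel_right] using
            hglip _ (hshift _ hmem τ hτ.1) _ (hshift _ hmem' τ hτ.1)
      _ ≤ lam * (exp (k * τ) * weightedSupNorm k (fun τ => xbar τ - xbar' τ)) := by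
          gcongr
          exact abs_le_exp_mul_weightedSupNorm hk.le
            (fun σ hσ => Real.dist_le_of_mem_Icc (hmem σ hσ) (hmem' σ hσ)) hτ.1
      _ = _ := by ring
  calc exp (-k * t) * |(|∫ τ in 0..t, g (xbar τ - y)| - |∫ τ in 0..t, g (xbar' τ - y)|)|
      ≤ exp (-k * t) * |∫ τ in 0..t, (g (xbar τ - y) - g (xbar' τ - y))| := by
        rw [integral_sub (hint xbar hc hmem) (hint xbar' hc' hmem')]
        exact mul_le_mul_of_nonneg_left (abs_abs_sub_abs_le_abs_sub _ _) (exp_pos _).le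
    _ ≤ lam * weightedSupNorm k (fun τ => xbar τ - xbar' τ) / k :=
        exp_neg_mul_abs_integral_le hk ht hpointwise
    _ = _ := (div_mul_eq_mul_div _ _ _).symm

/-- Weighted-norm estimate on the cost coefficient map: if `g` is Lipschitz
with constant `λ` on `[z − y, x̄₀ − y]`, then for continuous `x̄, x̄'` with
values in `[z, x̄₀]` and all `t ≥ 0`,
`e^{-kt} | |∫₀ᵗ g(x̄(τ)−y)dτ| − |∫₀ᵗ g(x̄'(τ)−y)dτ| | ≤ (λ/k)‖x̄ − x̄'‖_k`. -/
theorem cost_coefficient_weighted_lipschitz (k z xbar0 y lam : ℝ)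
    (hk : 0 < k) (hzx : z ≤ xbar0) (hlam : 0 ≤ lam) (g : ℝ → ℝ)
    (hglip : ∀ u ∈ Set.Icc (z - y) (xbar0 - y),
      ∀ v ∈ Set.Icc (z - y) (xbar0 - y), |g u - g v| ≤ lam * |u - v|) :
    ∀ xbar xbar' : ℝ → ℝ,
      ContinuousOn xbar (Set.Ici 0) → ContinuousOn xbar' (Set.Ici 0) →
      (∀ t ≥ (0 : ℝ), xbar t ∈ Set.Icc z xbar0) →
      (∀ t ≥ (0 : ℝ), xbar' t ∈ Set.Icc z xbar0) →
      ∀ t ≥ (0 : ℝ),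
        Real.exp (-k * t) *
          abs (|∫ τ in (0 : ℝ)..t, g (xbar τ - y)| -
            |∫ τ in (0 : ℝ)..t, g (xbar' τ - y)|)
        ≤ (lam / k) *
            sSup {v : ℝ | ∃ τ ≥ (0 : ℝ),
              v = Real.exp (-k * τ) * |xbar τ - xbar' τ|} :=
  cost_coefficient_weighted_lipschitz_general k z xbar0 y lam hk hlam g hglip
end

section
/- Let c₁, β, q⁰ > 0 and let q : [0,∞) → ℝ be continuous with q(t) → ∞ as t → ∞. If π : [0,∞) → ℝ is differentiable, nonnegative, and satisfies dπ/dt(t) = c₁ π(t) + β π(t)² − q(t) − q⁰ for all t ≥ 0, then π is unbounded: sup_{t≥0} π(t) = ∞. -/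
/-- If the state cost coefficient `q(t) → ∞`, then any nonnegative
differentiable solution `π` of the Riccati equation
`dπ/dt = c₁ π + β π² − q(t) − q⁰` is unbounded. -/
theorem riccati_solution_unbounded_of_cost_unbounded (c1 β q0 : ℝ)
    (hc1 : 0 < c1) (hβ : 0 < β) (hq0 : 0 < q0) (q π : ℝ → ℝ)
    (hqc : ContinuousOn q (Set.Ici 0))
    (hqTop : Filter.Tendsto q Filter.atTop Filter.atTop)
    (hπ : ∀ t ≥ (0 : ℝ),
      HasDerivAt π (c1 * π t + β * (π t) ^ 2 - q t - q0) t)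
    (hπnn : ∀ t ≥ (0 : ℝ), 0 ≤ π t) :
    ∀ M : ℝ, ∃ t ≥ (0 : ℝ), M < π t := by
  intro M
  by_contra h
  push_neg at h
  set M' : ℝ := max M 0 with hM'def
  have hM0 : 0 ≤ M' := le_max_right _ _
  have hbound : ∀ t ≥ (0:ℝ), π t ≤ M' := fun t ht =>
    (h t ht).trans (le_max_left _ _)
  obtain ⟨T0, hT0⟩ := Filter.eventually_atTop.mp
    (hqTop.eventually_ge_atTop (c1 * M' + β * M' ^ 2 + 1))
  set T : ℝ := max T0 0 with hTdef
  have hT0' : (0:ℝ) ≤ T := le_max_right _ _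
  -- derivative bound on [T, ∞)
  have hderiv : ∀ t ≥ T, c1 * π t + β * (π t) ^ 2 - q t - q0 ≤ -1 := by
    intro t ht
    have ht0 : (0:ℝ) ≤ t := le_trans hT0' ht
    have hq : c1 * M' + β * M' ^ 2 + 1 ≤ q t :=
      hT0 t (le_trans (le_max_left _ _) ht)
    have hπt := hπnn t ht0
    have hπM := hbound t ht0
    have h1 : c1 * π t ≤ c1 * M' := by nlinarith
    have hsq : (π t) ^ 2 ≤ M' ^ 2 := pow_le_pow_left₀ hπt hπM 2
    have h2 : β * (π t) ^ 2 ≤ β * M' ^ 2 := by nlinarith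
    nlinarith
  -- f t = π t + t is antitone on [T, ∞)
  set f : ℝ → ℝ := fun t => π t + t with hfdef
  have hfderiv : ∀ t ≥ T, HasDerivAt f
      (c1 * π t + β * (π t) ^ 2 - q t - q0 + 1) t := by
    intro t ht
    exact (hπ t (le_trans hT0' ht)).add (hasDerivAt_id t)
  have hanti : AntitoneOn f (Set.Ici T) := by
    apply antitoneOn_of_deriv_nonpos (convex_Ici T)
    · intro t ht
      exact (hfderiv t ht).continuousAt.continuousWithinAt
    · intro t ht
      rw [interior_Ici] at ht
      exact (hfderiv t (le_of_lt ht)).differentiableAt.differentiableWithinAt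
    · intro t ht
      rw [interior_Ici] at ht
      rw [(hfderiv t (le_of_lt ht)).deriv]
      have := hderiv t (le_of_lt ht)
      linarith
  set s : ℝ := π T + 1 with hsdef
  have hs : 0 < s := by
    have := hπnn T hT0'
    linarith
  have hkey : f (T + s) ≤ f T :=
    hanti (Set.self_mem_Ici) (by simp [Set.mem_Ici]; linarith) (by linarith)
  have hnn := hπnn (T + s) (by linarith)
  simp only [hfdef] at hkey
  linarith
end

section
/- Let a, b, r, δ, q^{x0} > 0, let z < x̄₀ be reals, and let q : [0,∞) → ℝ be continuous and nonnegative. Let u : [0,∞) → ℝ be a locally integrable control whose state x solves x'(t) = −a(x(t) − x̄₀) + b u(t) with x(0) = x̄₀, and suppose J(u) < ∞. If x(t₀) > x̄₀ for some t₀ > 0, then there exists a locally integrable control v, with state x̂ solving x̂'(t) = −a(x̂(t) − x̄₀) + b v(t), x̂(0) = x̄₀, such that J(v) < J(u). -/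
/-!
Let `α` be the last time before `t₀` at which the state equals `x̄₀` (it does at time `0`), and
`β` the first time after `t₀` at which it comes back to `x̄₀` (`β = ∞` if it never does). On the
excursion `(α, β)` replace the control by `0` and the state by the rest value `x̄₀`, keeping `u`
and `x` elsewhere. Since `x(α) = x(β) = x̄₀`, the increment of `x` over the excursion vanishes, so
the new pair still solves the state equation. The running cost does not increase anywhere, as
`z < x̄₀ < x` on the excursion, and it drops strictly there because of the term
`(q^{x0}/2)(x − x̄₀)² > 0`.
-/

open MeasureTheory Set

noncomputable def costFn (r δ qx0 z xbar0 : ℝ) (q u x : ℝ → ℝ) : ℝ → ℝ :=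
  fun t => Real.exp (-δ * t) *
    ((q t / 2) * (x t - z) ^ 2 + (qx0 / 2) * (x t - xbar0) ^ 2 +
      (r / 2) * (u t) ^ 2)

theorem MeasureTheory.LocallyIntegrableOn.indicator {X : Type*} [MeasurableSpace X]
    [TopologicalSpace X] {μ : Measure X} {f : X → ℝ} {s E : Set X}
    (hf : LocallyIntegrableOn f s μ) (hE : MeasurableSet E) :
    LocallyIntegrableOn (E.indicator f) s μ := fun t ht =>
  let ⟨U, hU, hfU⟩ := hf t ht
  ⟨U, hU, hfU.indicator hE⟩

theorem MeasureTheory.LocallyIntegrableOn.intervalIntegrable_of_Ici {f : ℝ → ℝ} {a t : ℝ}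
    (hf : LocallyIntegrableOn f (Ici a)) (ht : a ≤ t) : IntervalIntegrable f volume a t :=
  (hf.integrableOn_compact_subset (uIcc_of_le ht ▸ Icc_subset_Ici_self) isCompact_uIcc)
    |>.intervalIntegrable

theorem setIntegral_lt_setIntegral_of_le_of_lt {X : Type*} [MeasurableSpace X] {μ : Measure X}
    {s t : Set X} {f g : X → ℝ} (hs : MeasurableSet s) (hf : IntegrableOn f s μ)
    (hg : IntegrableOn g s μ) (hle : ∀ x ∈ s, f x ≤ g x) (hts : t ⊆ s) (ht : μ t ≠ 0)
    (hlt : ∀ x ∈ t, f x < g x) : ∫ x in s, f x ∂μ < ∫ x in s, g x ∂μ := by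
  rw [← sub_pos, ← integral_sub hg hf]
  refine (setIntegral_pos_iff_support_of_nonneg_ae (f := g - f) ?_ (hg.sub hf)).2 ?_
  · filter_upwards [ae_restrict_mem hs] with x hx using sub_nonneg.2 (hle x hx)
  · exact (pos_iff_ne_zero.2 ht).trans_le <|
      measure_mono fun x hx => ⟨(sub_pos.2 (hlt x hx)).ne', hts hx⟩

section Primitive

variable {g F : ℝ → ℝ}

theorem IntervalIntegrable.indicator {μ : Measure ℝ} {a b : ℝ} (hg : IntervalIntegrable g μ a b)
    {E : Set ℝ} (hE : MeasurableSet E) : IntervalIntegrable (E.indicator g) μ a b :=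
  ⟨hg.1.indicator hE, hg.2.indicator hE⟩

theorem continuousOn_primitive_Ici (hg : ∀ t ≥ 0, IntervalIntegrable g volume 0 t) :
    ContinuousOn (fun t => ∫ s in 0..t, g s) (Ici 0) := by
  intro t ht
  have ht1 : 0 ≤ t + 1 := by linarith [mem_Ici.1 ht]
  have h := intervalIntegral.continuousOn_primitive_interval' (hg (t + 1) ht1) left_mem_uIcc
  rw [uIcc_of_le ht1] at h
  refine (h t ⟨ht, by linarith⟩).mono_of_mem_nhdsWithin ?_
  rw [← Ici_inter_Iic]
  exact inter_mem_nhdsWithin _ (Iic_mem_nhds (lt_add_one t))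

theorem integral_indicator_Ioi_eq_indicator (hF : ∀ t ≥ 0, ∫ s in 0..t, g s = F t)
    (hg : ∀ t ≥ 0, IntervalIntegrable g volume 0 t) {α : ℝ} (hα : 0 ≤ α) (hFα : F α = 0) :
    ∀ t ≥ 0, ∫ s in 0..t, (Ioi α).indicator g s = (Ioi α).indicator F t := by
  intro t ht
  rcases le_or_gt t α with htα | htα
  · rw [indicator_of_notMem (notMem_Ioi.2 htα)]
    refine intervalIntegral.integral_zero_ae (Filter.Eventually.of_forall fun s hs => ?_)
    rw [uIoc_of_le ht] at hs
    exact indicator_of_notMem (notMem_Ioi.2 (hs.2.trans htα)) g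
  · have hgα : IntervalIntegrable g volume 0 α := (hg t ht).mono_set <| by
      rw [uIcc_of_le ht, uIcc_of_le hα]; exact Icc_subset_Icc_right htα.le
    calc ∫ s in 0..t, (Ioi α).indicator g s = ∫ s in α..t, g s := by
          rw [intervalIntegral.integral_of_le ht, intervalIntegral.integral_of_le htα.le,
            integral_indicator measurableSet_Ioi, Measure.restrict_restrict measurableSet_Ioi,
            inter_comm, Ioc_inter_Ioi, max_eq_right hα]
      _ = F t - F α := by
          rw [← intervalIntegral.integral_interval_sub_left (hg t ht) hgα, hF t ht, hF α hα]
      _ = (Ioi α).indicator F t := by rw [hFα, sub_zero, indicator_of_mem (mem_Ioi.2 htα)]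

theorem integral_indicator_Ici_eq_indicator (hF : ∀ t ≥ 0, ∫ s in 0..t, g s = F t)
    (hg : ∀ t ≥ 0, IntervalIntegrable g volume 0 t) {β : ℝ} (hβ : 0 ≤ β) (hFβ : F β = 0) :
    ∀ t ≥ 0, ∫ s in 0..t, (Ici β).indicator g s = (Ici β).indicator F t := by
  intro t ht
  have hFt : (Ici β).indicator F t = (Ioi β).indicator F t := by
    rcases eq_or_ne t β with rfl | htβ
    · simp [hFβ]
    · simp only [indicator_apply, mem_Ici, mem_Ioi, htβ.symm.le_iff_lt]
  rw [hFt, ← integral_indicator_Ioi_eq_indicator hF hg hβ hFβ t ht]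
  refine intervalIntegral.integral_congr_ae ?_
  filter_upwards [indicator_ae_eq_of_ae_eq_set (f := g) (Ioi_ae_eq_Ici (a := β)).symm] with s hs
  exact fun _ => hs

theorem integral_indicator_Ioo_eq_indicator (hF : ∀ t ≥ 0, ∫ s in 0..t, g s = F t)
    (hg : ∀ t ≥ 0, IntervalIntegrable g volume 0 t) {α β : ℝ} (hα : 0 ≤ α) (hαβ : α < β)
    (hFα : F α = 0) (hFβ : F β = 0) :
    ∀ t ≥ 0, ∫ s in 0..t, (Ioo α β).indicator g s = (Ioo α β).indicator F t := by
  intro t ht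
  have hsub : Ici β ⊆ Ioi α := Ici_subset_Ioi.2 hαβ
  simp only [← Ioi_sdiff_Ici, indicator_sdiff hsub, Pi.sub_apply]
  rw [intervalIntegral.integral_sub, integral_indicator_Ioi_eq_indicator hF hg hα hFα t ht,
    integral_indicator_Ici_eq_indicator hF hg (hα.trans hαβ.le) hFβ t ht]
  · exact (hg t ht).indicator measurableSet_Ioi
  · exact (hg t ht).indicator measurableSet_Ici

theorem integral_indicator_compl_eq_indicator (hF : ∀ t ≥ 0, ∫ s in 0..t, g s = F t)
    (hg : ∀ t ≥ 0, IntervalIntegrable g volume 0 t) {E : Set ℝ} (hE : MeasurableSet E)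
    (hEF : ∀ t ≥ 0, ∫ s in 0..t, E.indicator g s = E.indicator F t) :
    ∀ t ≥ 0, ∫ s in 0..t, Eᶜ.indicator g s = Eᶜ.indicator F t := by
  intro t ht
  simp only [indicator_compl, Pi.sub_apply]
  rw [intervalIntegral.integral_sub (hg t ht) ((hg t ht).indicator hE), hF t ht, hEF t ht]

end Primitive

theorem ContinuousOn.exists_last_eq_of_lt {f : ℝ → ℝ} {a b c : ℝ} (hab : a ≤ b)
    (hf : ContinuousOn f (Icc a b)) (ha : f a = c) (hb : c < f b) :
    ∃ α ∈ Ico a b, f α = c ∧ ∀ s ∈ Ioc α b, c < f s := by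
  set S := Icc a b ∩ f ⁻¹' {c}
  have hSc : IsClosed S := hf.preimage_isClosed_of_isClosed isClosed_Icc isClosed_singleton
  have hSb : BddAbove S := ⟨b, fun s hs => hs.1.2⟩
  obtain ⟨⟨haα, hαb⟩, hfα⟩ : sSup S ∈ S := hSc.csSup_mem ⟨a, ⟨left_mem_Icc.2 hab, ha⟩⟩ hSb
  refine ⟨sSup S, ⟨haα, hαb.lt_of_ne fun h => hb.ne' (h ▸ hfα)⟩, hfα, fun s hs => ?_⟩
  by_contra! hfs
  obtain ⟨p, hp, hfp⟩ := intermediate_value_Icc hs.2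
    (hf.mono (Icc_subset_Icc_left (haα.trans hs.1.le))) ⟨hfs, hb.le⟩
  have : p ≤ sSup S := le_csSup hSb ⟨⟨haα.trans (hs.1.le.trans hp.1), hp.2⟩, hfp⟩
  linarith [hs.1, hp.1]

theorem ContinuousOn.exists_first_eq_of_lt {f : ℝ → ℝ} {a c : ℝ} (hf : ContinuousOn f (Ici a))
    (ha : c < f a) (hret : ∃ s ≥ a, f s ≤ c) :
    ∃ β > a, f β = c ∧ ∀ s ∈ Ico a β, c < f s := by
  set T := Ici a ∩ f ⁻¹' Iic c
  have hTc : IsClosed T := hf.preimage_isClosed_of_isClosed isClosed_Ici isClosed_Iic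
  have hTb : BddBelow T := ⟨a, fun s hs => hs.1⟩
  obtain ⟨haβ, hfβ⟩ : sInf T ∈ T := hTc.csInf_mem hret hTb
  have haβ' : a < sInf T := (mem_Ici.1 haβ).lt_of_ne fun h => (h ▸ ha).not_ge hfβ
  obtain ⟨p, hp, hfp⟩ := intermediate_value_Icc' haβ'.le (hf.mono Icc_subset_Ici_self)
    ⟨hfβ, ha.le⟩
  have hβp : sInf T ≤ p := csInf_le hTb ⟨hp.1, hfp.le⟩
  refine ⟨sInf T, haβ', le_antisymm hfβ ?_, fun s hs => ?_⟩
  · rw [le_antisymm hp.2 hβp] at hfp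
    exact hfp.ge
  · by_contra! hfs
    exact hs.2.not_ge (csInf_le hTb ⟨hs.1, hfs⟩)

section Cost

variable {a b r δ qx0 z xbar0 : ℝ} {q u x : ℝ → ℝ}

theorem costFn_nonneg (hr : 0 ≤ r) (hqx0 : 0 ≤ qx0) {t : ℝ} (hq : 0 ≤ q t) :
    0 ≤ costFn r δ qx0 z xbar0 q u x t := by
  unfold costFn; positivity

theorem costFn_lt_of_rest {v xv : ℝ → ℝ} {t : ℝ} (hr : 0 ≤ r) (hqx0 : 0 < qx0) (hq : 0 ≤ q t)
    (hz : z < xbar0) (hx : xbar0 < x t) (hv : v t = 0) (hxv : xv t = xbar0) :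
    costFn r δ qx0 z xbar0 q v xv t < costFn r δ qx0 z xbar0 q u x t := by
  unfold costFn
  rw [hv, hxv]
  have htrack : q t / 2 * (xbar0 - z) ^ 2 ≤ q t / 2 * (x t - z) ^ 2 := by gcongr
  have hdev : 0 < qx0 / 2 * (x t - xbar0) ^ 2 := by have := sub_pos.2 hx; positivity
  refine mul_lt_mul_of_pos_left ?_ (Real.exp_pos _)
  nlinarith [sq_nonneg (u t)]

theorem aestronglyMeasurable_costFn {μ : Measure ℝ} (hq : AEStronglyMeasurable q μ)
    (hu : AEStronglyMeasurable u μ) (hx : AEStronglyMeasurable x μ) :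
    AEStronglyMeasurable (costFn r δ qx0 z xbar0 q u x) μ := by
  unfold costFn
  fun_prop

theorem exists_cheaper_control_of_rest_on (hr : 0 ≤ r) (hqx0 : 0 < qx0) (hz : z < xbar0)
    (hqc : ContinuousOn q (Ici 0)) (hqnn : ∀ t ≥ (0 : ℝ), 0 ≤ q t)
    (hu : LocallyIntegrableOn u (Ici 0))
    (hG : ∀ t ≥ (0 : ℝ), IntervalIntegrable (fun s => -a * (x s - xbar0) + b * u s) volume 0 t)
    (hF : ∀ t ≥ (0 : ℝ), ∫ s in (0 : ℝ)..t, (-a * (x s - xbar0) + b * u s) = x t - xbar0)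
    (hJ : IntegrableOn (costFn r δ qx0 z xbar0 q u x) (Ioi 0))
    {E : Set ℝ} (hEm : MeasurableSet E) (hE0 : E ⊆ Ioi 0) (hE : volume E ≠ 0)
    (hxE : ∀ t ∈ E, xbar0 < x t)
    (hEF : ∀ t ≥ (0 : ℝ),
      ∫ s in (0 : ℝ)..t, E.indicator (fun s => -a * (x s - xbar0) + b * u s) s =
        E.indicator (fun t => x t - xbar0) t) :
    ∃ v xv : ℝ → ℝ,
      LocallyIntegrableOn v (Ici 0) ∧
      ContinuousOn xv (Ici 0) ∧
      (∀ t ≥ (0 : ℝ),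
        xv t = xbar0 + ∫ s in (0 : ℝ)..t, (-a * (xv s - xbar0) + b * v s)) ∧
      IntegrableOn (costFn r δ qx0 z xbar0 q v xv) (Ioi 0) ∧
      (∫ t in Ioi (0 : ℝ), costFn r δ qx0 z xbar0 q v xv t) <
        ∫ t in Ioi (0 : ℝ), costFn r δ qx0 z xbar0 q u x t := by
  classical
  set G : ℝ → ℝ := fun s => -a * (x s - xbar0) + b * u s
  set v : ℝ → ℝ := Eᶜ.indicator u
  set xv : ℝ → ℝ := E.piecewise (fun _ => xbar0) x
  have hrhs : (fun s => -a * (xv s - xbar0) + b * v s) = Eᶜ.indicator G := by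
    ext s
    by_cases hs : s ∈ E <;> simp [hs, v, xv, G]
  have hxv : ∀ t ≥ (0 : ℝ), xv t = xbar0 + ∫ s in (0 : ℝ)..t, Eᶜ.indicator G s := by
    intro t ht
    rw [integral_indicator_compl_eq_indicator hF hG hEm hEF t ht]
    by_cases htE : t ∈ E <;> simp [htE, xv]
  have hxvc : ContinuousOn xv (Ici 0) :=
    (continuousOn_const.add (continuousOn_primitive_Ici fun t ht =>
      (hG t ht).indicator hEm.compl)).congr fun t ht => hxv t ht
  have hlt : ∀ t ∈ E, costFn r δ qx0 z xbar0 q v xv t < costFn r δ qx0 z xbar0 q u x t :=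
    fun t htE => costFn_lt_of_rest hr hqx0 (hqnn t (hE0 htE).le) hz (hxE t htE)
      (by simp [v, htE]) (by simp [xv, htE])
  have hle : ∀ t ∈ Ioi (0 : ℝ),
      costFn r δ qx0 z xbar0 q v xv t ≤ costFn r δ qx0 z xbar0 q u x t := by
    intro t _
    by_cases htE : t ∈ E
    · exact (hlt t htE).le
    · simp [costFn, v, xv, htE]
  have hint : IntegrableOn (costFn r δ qx0 z xbar0 q v xv) (Ioi 0) := by
    have hmono : volume.restrict (Ioi (0 : ℝ)) ≤ volume.restrict (Ici 0) :=
      Measure.restrict_mono Ioi_subset_Ici_self le_rfl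
    refine hJ.mono' (aestronglyMeasurable_costFn
      ((hqc.aestronglyMeasurable measurableSet_Ici).mono_measure hmono)
      ((hu.indicator hEm.compl).aestronglyMeasurable.mono_measure hmono)
      ((hxvc.aestronglyMeasurable measurableSet_Ici).mono_measure hmono)) ?_
    filter_upwards [ae_restrict_mem measurableSet_Ioi] with t ht
    rw [Real.norm_of_nonneg (costFn_nonneg hr hqx0.le (hqnn t (le_of_lt ht)))]
    exact hle t ht
  exact ⟨v, xv, hu.indicator hEm.compl, hxvc, hrhs ▸ hxv, hint,
    setIntegral_lt_setIntegral_of_le_of_lt measurableSet_Ioi hint hJ hle hE0 hE hlt⟩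

end Cost

theorem not_optimal_if_state_exceeds_upper_bound_general (a b r δ qx0 z xbar0 : ℝ)
    (hr : 0 < r) (hqx0 : 0 < qx0)
    (hz : z < xbar0) (q : ℝ → ℝ)
    (hqc : ContinuousOn q (Set.Ici 0)) (hqnn : ∀ t ≥ (0 : ℝ), 0 ≤ q t)
    (u x : ℝ → ℝ)
    (hu : LocallyIntegrableOn u (Set.Ici 0))
    (hxc : ContinuousOn x (Set.Ici 0))
    (hx : ∀ t ≥ (0 : ℝ),
      x t = xbar0 + ∫ s in (0 : ℝ)..t, (-a * (x s - xbar0) + b * u s))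
    (hJ : IntegrableOn (costFn r δ qx0 z xbar0 q u x) (Set.Ioi 0))
    (t0 : ℝ) (ht0 : 0 < t0) (hexc : xbar0 < x t0) :
    ∃ v xv : ℝ → ℝ,
      LocallyIntegrableOn v (Set.Ici 0) ∧
      ContinuousOn xv (Set.Ici 0) ∧
      (∀ t ≥ (0 : ℝ),
        xv t = xbar0 + ∫ s in (0 : ℝ)..t, (-a * (xv s - xbar0) + b * v s)) ∧
      IntegrableOn (costFn r δ qx0 z xbar0 q v xv) (Set.Ioi 0) ∧
      (∫ t in Set.Ioi (0 : ℝ), costFn r δ qx0 z xbar0 q v xv t) <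
        ∫ t in Set.Ioi (0 : ℝ), costFn r δ qx0 z xbar0 q u x t := by
  have hG : ∀ t ≥ (0 : ℝ),
      IntervalIntegrable (fun s => -a * (x s - xbar0) + b * u s) volume 0 t := fun t ht =>
    (((hxc.mono (uIcc_of_le ht ▸ Icc_subset_Ici_self)).intervalIntegrable.sub
      intervalIntegrable_const).const_mul (-a)).add ((hu.intervalIntegrable_of_Ici ht).const_mul b)
  have hF : ∀ t ≥ (0 : ℝ), ∫ s in (0 : ℝ)..t, (-a * (x s - xbar0) + b * u s) = x t - xbar0 :=
    fun t ht => eq_sub_of_add_eq' (hx t ht).symm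
  have hx0 : x 0 = xbar0 := by simpa using hx 0 le_rfl
  obtain ⟨α, ⟨hα0, hαt0⟩, hxα, hxα_gt⟩ := (hxc.mono Icc_subset_Ici_self).exists_last_eq_of_lt
    ht0.le hx0 hexc
  by_cases hret : ∃ s ≥ t0, x s ≤ xbar0
  · obtain ⟨β, hβ, hxβ, hxβ_gt⟩ :=
      (hxc.mono (Ici_subset_Ici.2 ht0.le)).exists_first_eq_of_lt hexc hret
    refine exists_cheaper_control_of_rest_on hr.le hqx0 hz hqc hqnn hu hG hF hJ measurableSet_Ioo
      (Ioo_subset_Ioi_self.trans (Ioi_subset_Ioi hα0))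
      ((Measure.measure_Ioo_pos volume).2 (hαt0.trans hβ)).ne' (fun s hs => ?_)
      (integral_indicator_Ioo_eq_indicator hF hG hα0 (hαt0.trans hβ) (sub_eq_zero.2 hxα)
        (sub_eq_zero.2 hxβ))
    rcases le_or_gt s t0 with hst0 | hst0
    exacts [hxα_gt s ⟨hs.1, hst0⟩, hxβ_gt s ⟨hst0.le, hs.2⟩]
  · push Not at hret
    refine exists_cheaper_control_of_rest_on hr.le hqx0 hz hqc hqnn hu hG hF hJ measurableSet_Ioi
      (Ioi_subset_Ioi hα0) (Measure.measure_Ioi_pos volume α).ne' (fun s hs => ?_)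
      (integral_indicator_Ioi_eq_indicator hF hG hα0 (sub_eq_zero.2 hxα))
    rcases le_or_gt s t0 with hst0 | hst0
    exacts [hxα_gt s ⟨hs, hst0⟩, hret s hst0.le]

/-- If the state of a finite-cost admissible control exceeds `x̄₀` at some
time `t₀ > 0`, then the control is not optimal: there is an admissible
control with strictly smaller cost. -/
theorem not_optimal_if_state_exceeds_upper_bound (a b r δ qx0 z xbar0 : ℝ)
    (ha : 0 < a) (hb : 0 < b) (hr : 0 < r) (hδ : 0 < δ) (hqx0 : 0 < qx0)
    (hz : z < xbar0) (q : ℝ → ℝ)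
    (hqc : ContinuousOn q (Set.Ici 0)) (hqnn : ∀ t ≥ (0 : ℝ), 0 ≤ q t)
    (u x : ℝ → ℝ)
    (hu : LocallyIntegrableOn u (Set.Ici 0))
    (hxc : ContinuousOn x (Set.Ici 0))
    (hx : ∀ t ≥ (0 : ℝ),
      x t = xbar0 + ∫ s in (0 : ℝ)..t, (-a * (x s - xbar0) + b * u s))
    (hJ : IntegrableOn (costFn r δ qx0 z xbar0 q u x) (Set.Ioi 0))
    (t0 : ℝ) (ht0 : 0 < t0) (hexc : xbar0 < x t0) :
    ∃ v xv : ℝ → ℝ,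
      LocallyIntegrableOn v (Set.Ici 0) ∧
      ContinuousOn xv (Set.Ici 0) ∧
      (∀ t ≥ (0 : ℝ),
        xv t = xbar0 + ∫ s in (0 : ℝ)..t, (-a * (xv s - xbar0) + b * v s)) ∧
      IntegrableOn (costFn r δ qx0 z xbar0 q v xv) (Set.Ioi 0) ∧
      (∫ t in Set.Ioi (0 : ℝ), costFn r δ qx0 z xbar0 q v xv t) <
        ∫ t in Set.Ioi (0 : ℝ), costFn r δ qx0 z xbar0 q u x t :=
  not_optimal_if_state_exceeds_upper_bound_general a b r δ qx0 z xbar0 hr hqx0 hz q hqc hqnn u x hu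
    hxc hx hJ t0 ht0 hexc
end

section
/- Let δ > 0, let t₁ < t₂ be reals, let z be a real number, and let x : [t₁, t₂] → ℝ be continuously differentiable with x(t₁) = z, x(t₂) = z, and x(t)² ≥ z² for all t ∈ [t₁, t₂]. Then ∫_{t₁}^{t₂} e^{-δt} x(t) x'(t) dt ≥ 0. -/
/-- Integration-by-parts inequality: if `x` is continuously differentiable on
`[t₁, t₂]` with `x(t₁) = x(t₂) = z` and `x(t)² ≥ z²` on `[t₁, t₂]`, then
`∫_{t₁}^{t₂} e^{-δt} x(t) x'(t) dt ≥ 0`. -/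
theorem discounted_integration_by_parts_nonneg (δ t1 t2 z : ℝ)
    (hδ : 0 < δ) (ht : t1 < t2) (x x' : ℝ → ℝ)
    (hx'c : ContinuousOn x' (Set.Icc t1 t2))
    (hderiv : ∀ t ∈ Set.Icc t1 t2,
      HasDerivWithinAt x (x' t) (Set.Icc t1 t2) t)
    (h1 : x t1 = z) (h2 : x t2 = z)
    (hsq : ∀ t ∈ Set.Icc t1 t2, z ^ 2 ≤ (x t) ^ 2) :
    0 ≤ ∫ t in t1..t2, Real.exp (-δ * t) * x t * x' t := by
  have hle := ht.le
  have huIcc : Set.uIcc t1 t2 = Set.Icc t1 t2 := Set.uIcc_of_le hle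
  set e : ℝ → ℝ := fun t => Real.exp (-δ * t) with he
  have hec : Continuous e := by fun_prop
  have hxc : ContinuousOn x (Set.Icc t1 t2) := fun t htI =>
    (hderiv t htI).continuousWithinAt
  have hederiv : ∀ t : ℝ, HasDerivAt e (-δ * e t) t := by
    intro t
    have := ((hasDerivAt_id t).const_mul (-δ)).exp
    simpa [he, mul_comm] using this
  -- derivative of g = e * x²
  have hg : ∀ t ∈ Set.Icc t1 t2,
      HasDerivWithinAt (fun s => e s * (x s) ^ 2)
        ((-δ * e t) * (x t) ^ 2 + e t * (2 * x t ^ 1 * x' t)) (Set.Icc t1 t2) t := by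
    intro t htI
    exact ((hederiv t).hasDerivWithinAt).mul ((hderiv t htI).pow 2)
  -- integrability pieces
  have hint1 : IntervalIntegrable (fun t => e t * x t * x' t) MeasureTheory.volume t1 t2 := by
    apply ContinuousOn.intervalIntegrable
    rw [huIcc]
    exact ((hec.continuousOn.mul hxc).mul hx'c)
  have hint2 : IntervalIntegrable (fun t => e t * (x t) ^ 2) MeasureTheory.volume t1 t2 := by
    apply ContinuousOn.intervalIntegrable
    rw [huIcc]
    exact hec.continuousOn.mul (hxc.pow 2)
  -- FTC for g
  have hFTC : (∫ t in t1..t2, ((-δ * e t) * (x t) ^ 2 + e t * (2 * x t ^ 1 * x' t)))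
      = e t2 * (x t2) ^ 2 - e t1 * (x t1) ^ 2 := by
    apply intervalIntegral.integral_eq_sub_of_hasDeriv_right_of_le hle
    · exact (hec.continuousOn.mul (hxc.pow 2)).mono (by rw [← huIcc])
    · intro t htI
      have htIcc : t ∈ Set.Icc t1 t2 := Set.mem_Icc_of_Ioo htI
      refine (hg t htIcc).mono_of_mem_nhdsWithin ?_
      exact nhdsWithin_le_nhds (Icc_mem_nhds htI.1 htI.2)
    · apply ContinuousOn.intervalIntegrable
      rw [huIcc]
      exact ((continuousOn_const.mul hec.continuousOn).mul (hxc.pow 2)).add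
        (hec.continuousOn.mul ((continuousOn_const.mul (hxc.pow 1)).mul hx'c))
  -- split
  have hsplit : (∫ t in t1..t2, ((-δ * e t) * (x t) ^ 2 + e t * (2 * x t ^ 1 * x' t)))
      = (-δ) * (∫ t in t1..t2, e t * (x t) ^ 2) + 2 * (∫ t in t1..t2, e t * x t * x' t) := by
    have hcong : (∫ t in t1..t2, ((-δ * e t) * (x t) ^ 2 + e t * (2 * x t ^ 1 * x' t)))
        = ∫ t in t1..t2, ((-δ) * (e t * (x t) ^ 2) + 2 * (e t * x t * x' t)) := by
      apply intervalIntegral.integral_congr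
      intro t _; ring
    rw [hcong, intervalIntegral.integral_add (hint2.const_mul (-δ)) (hint1.const_mul 2),
      intervalIntegral.integral_const_mul, intervalIntegral.integral_const_mul]
  -- integral of e
  have hIe : (∫ t in t1..t2, e t) = (e t1 - e t2) / δ := by
    have : (∫ t in t1..t2, -δ * e t) = e t2 - e t1 := by
      apply intervalIntegral.integral_eq_sub_of_hasDerivAt
      · intro t _; exact hederiv t
      · apply ContinuousOn.intervalIntegrable
        exact (hec.const_smul (-δ)).continuousOn
    rw [intervalIntegral.integral_const_mul] at this
    field_simp
    nlinarith [this]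
  -- comparison
  have hmono : z ^ 2 * ((e t1 - e t2) / δ) ≤ ∫ t in t1..t2, e t * (x t) ^ 2 := by
    have : (∫ t in t1..t2, e t * z ^ 2) ≤ ∫ t in t1..t2, e t * (x t) ^ 2 := by
      apply intervalIntegral.integral_mono_on hle _ hint2
      · intro t htI
        exact mul_le_mul_of_nonneg_left (hsq t htI) (Real.exp_pos _).le
      · apply ContinuousOn.intervalIntegrable
        rw [huIcc]; exact hec.continuousOn.mul continuousOn_const
    calc z ^ 2 * ((e t1 - e t2) / δ) = ∫ t in t1..t2, e t * z ^ 2 := by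
          rw [show (fun t => e t * z ^ 2) = (fun t => z ^ 2 * e t) by funext t; ring]
          rw [intervalIntegral.integral_const_mul, hIe]
      _ ≤ _ := this
  rw [hsplit, h1, h2] at hFTC
  have hmono' : z ^ 2 * (e t1 - e t2) ≤ δ * ∫ t in t1..t2, e t * (x t) ^ 2 := by
    have := mul_le_mul_of_nonneg_left hmono hδ.le
    calc z ^ 2 * (e t1 - e t2) = δ * (z ^ 2 * ((e t1 - e t2) / δ)) := by
          field_simp
      _ ≤ _ := this
  show 0 ≤ ∫ t in t1..t2, e t * x t * x' t
  nlinarith [hmono', hFTC]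
end

section
/- Let a, b, δ, r, q^{x0} > 0 and let z < y < x̄₀ be real numbers. Suppose (π, s, q) ∈ ℝ³ satisfies the algebraic system: (i) 0 = −(2a + δ)π − (b²/r)π² + q + q^{x0}; (ii) 0 = −(a + δ + (b²/r)π) s + (a π − q^{x0})(x̄₀ − z); (iii) 0 = −(a + (b²/r)π) y − (b²/r)(s − π z) + a x̄₀. Then q = ((a(a+δ)r + q^{x0} b²)/b²) · ((x̄₀ − y)/(y − z)). -/
/-- The steady-state collective target tracking equations determine the
steady-state cost coefficient uniquely:
`q = ((a(a+δ)r + q^{x0} b²)/b²)((x̄₀ − y)/(y − z))`. -/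
theorem steady_state_cost_coefficient (a b δ r qx0 z y xbar0 π s q : ℝ)
    (ha : 0 < a) (hb : 0 < b) (hδ : 0 < δ) (hr : 0 < r) (hqx0 : 0 < qx0)
    (hzy : z < y) (hyx : y < xbar0)
    (h1 : 0 = -(2 * a + δ) * π - (b ^ 2 / r) * π ^ 2 + q + qx0)
    (h2 : 0 = -(a + δ + (b ^ 2 / r) * π) * s + (a * π - qx0) * (xbar0 - z))
    (h3 : 0 = -(a + (b ^ 2 / r) * π) * y - (b ^ 2 / r) * (s - π * z) + a * xbar0) :
    q = ((a * (a + δ) * r + qx0 * b ^ 2) / b ^ 2) * ((xbar0 - y) / (y - z)) := by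
  have hrne : r ≠ 0 := hr.ne'
  have hbne : b ^ 2 ≠ 0 := by positivity
  have hyz : y - z ≠ 0 := sub_ne_zero.mpr hzy.ne'
  field_simp at h1 h2 h3
  have key : q * (b ^ 2 * (y - z)) * r = (a * (a + δ) * r + qx0 * b ^ 2) * (xbar0 - y) * r := by
    linear_combination (-(b ^ 2)) * h2 + ((a + δ) * r + b ^ 2 * π) * h3 - b ^ 2 * (y - z) * h1
  have key' := mul_right_cancel₀ hrne key
  rw [div_mul_div_comm, eq_div_iff (mul_ne_zero hbne hyz)]
  linear_combination key'
end

section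
/- Let a, M > 0 and let A : [0,∞) → ℝ be differentiable with A(t) ≥ a and |A'(t)| ≤ M for all t ≥ 0. Define f(t) := ∫₀ᵗ exp(−∫_η^t A(τ) dτ) dη. Then for all t ≥ 0, 0 ≤ f(t) ≤ 1/a and f(t) A(t) ≤ 2 + M/a². -/
/-!
Write `F(η) = exp(-∫_η^t A)`, so that `∂_η F = F A` and `F(η) ≤ e^{-a(t-η)}`. The first bound is
`∫₀ᵗ F ≤ ∫₀ᵗ e^{-a(t-η)} ≤ 1/a`. For the second, split
`f(t) A(t) = ∫₀ᵗ F(η) (A(t) - A(η)) dη + ∫₀ᵗ F A`: the last integral is `1 - F(0) ≤ 1`, and since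
`|A(t) - A(η)| ≤ M (t - η)` the first is at most `M ∫₀^∞ s e^{-a s} ds = M/a²`.
-/

open MeasureTheory Set Real intervalIntegral

theorem hasDerivAt_neg_mul (a s : ℝ) : HasDerivAt (fun s => -(a * s)) (-a) s := by
  simpa using ((hasDerivAt_id' s).const_mul a).fun_neg

section ExponentialIntegrals

variable {a : ℝ}

theorem integral_exp_neg_mul (ha : a ≠ 0) (t : ℝ) :
    ∫ s in (0 : ℝ)..t, exp (-(a * s)) = (1 - exp (-(a * t))) / a := by
  have hderiv : ∀ s ∈ uIcc (0 : ℝ) t,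
      HasDerivAt (fun s => -exp (-(a * s)) / a) (exp (-(a * s))) s := by
    intro s _
    refine ((hasDerivAt_neg_mul a s).exp.fun_neg.div_const a).congr_deriv ?_
    field_simp
  rw [integral_eq_sub_of_hasDerivAt hderiv ((by fun_prop : Continuous _).intervalIntegrable _ _)]
  simp only [mul_zero, neg_zero, exp_zero]
  ring

theorem integral_mul_exp_neg_mul (ha : a ≠ 0) (t : ℝ) :
    ∫ s in (0 : ℝ)..t, s * exp (-(a * s)) = (1 - (1 + a * t) * exp (-(a * t))) / a ^ 2 := by
  have hderiv : ∀ s ∈ uIcc (0 : ℝ) t,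
      HasDerivAt (fun s => -((1 + a * s) * exp (-(a * s))) / a ^ 2) (s * exp (-(a * s))) s := by
    intro s _
    have hlin : HasDerivAt (fun s => 1 + a * s) a s := by
      simpa using ((hasDerivAt_id s).const_mul a).const_add 1
    refine ((hlin.mul (hasDerivAt_neg_mul a s).exp).fun_neg.div_const (a ^ 2)).congr_deriv ?_
    field_simp
    ring
  rw [integral_eq_sub_of_hasDerivAt hderiv ((by fun_prop : Continuous _).intervalIntegrable _ _)]
  simp only [mul_zero, add_zero, neg_zero, exp_zero, one_mul]
  ring

theorem integral_exp_neg_mul_sub_le (ha : 0 < a) (s t : ℝ) :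
    ∫ η in s..t, exp (-(a * (t - η))) ≤ 1 / a := by
  rw [integral_comp_sub_left (fun x => exp (-(a * x))), sub_self, integral_exp_neg_mul ha.ne']
  gcongr
  linarith [exp_pos (-(a * (t - s)))]

theorem integral_sub_mul_exp_neg_mul_sub_le (ha : 0 < a) {s t : ℝ} (hst : s ≤ t) :
    ∫ η in s..t, (t - η) * exp (-(a * (t - η))) ≤ 1 / a ^ 2 := by
  rw [integral_comp_sub_left (fun x => x * exp (-(a * x))), sub_self,
    integral_mul_exp_neg_mul ha.ne']
  gcongr
  have hpos : 0 ≤ 1 + a * (t - s) := by nlinarith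
  linarith [mul_nonneg hpos (exp_pos (-(a * (t - s)))).le]

end ExponentialIntegrals

section Propagator

variable {A : ℝ → ℝ} {a s t : ℝ}

theorem continuousOn_exp_neg_integral (hst : s ≤ t) (hA : ContinuousOn A (Icc s t)) :
    ContinuousOn (fun η => exp (-∫ τ in η..t, A τ)) (Icc s t) := by
  have hprim := continuousOn_primitive_interval_left (μ := volume)
    (hA.integrableOn_Icc.mono_set (uIcc_of_le hst).le)
  rw [uIcc_of_le hst] at hprim
  exact hprim.neg.rexp

theorem exp_neg_integral_le (hA : ContinuousOn A (Icc s t)) (hlb : ∀ τ ∈ Icc s t, a ≤ A τ)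
    {η : ℝ} (hη : η ∈ Icc s t) :
    exp (-∫ τ in η..t, A τ) ≤ exp (-(a * (t - η))) := by
  have hAη : ContinuousOn A (Icc η t) := hA.mono (Icc_subset_Icc_left hη.1)
  have hint := integral_mono_on hη.2 intervalIntegrable_const
    (hAη.intervalIntegrable_of_Icc (μ := volume) hη.2) fun τ hτ => hlb τ ⟨hη.1.trans hτ.1, hτ.2⟩
  rw [intervalIntegral.integral_const, smul_eq_mul, mul_comm] at hint
  gcongr

theorem integral_exp_neg_integral_mul (hst : s ≤ t) (hA : ContinuousOn A (Icc s t)) :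
    ∫ η in s..t, exp (-∫ τ in η..t, A τ) * A η = 1 - exp (-∫ τ in s..t, A τ) := by
  have hderiv : ∀ η ∈ Ioo s t,
      HasDerivAt (fun η => exp (-∫ τ in η..t, A τ)) (exp (-∫ τ in η..t, A τ) * A η) η := by
    intro η hη
    have hAη : ContinuousAt A η := hA.continuousAt (Icc_mem_nhds hη.1 hη.2)
    have hint : IntervalIntegrable A volume η t :=
      (hA.mono (Icc_subset_Icc_left hη.1.le)).intervalIntegrable_of_Icc hη.2.le
    simpa using (integral_hasDerivAt_left hint
      ((hA.mono Ioo_subset_Icc_self).stronglyMeasurableAtFilter isOpen_Ioo η hη) hAη).fun_neg.exp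
  rw [integral_eq_sub_of_hasDerivAt_of_le hst (continuousOn_exp_neg_integral hst hA) hderiv
    (((continuousOn_exp_neg_integral hst hA).mul hA).intervalIntegrable_of_Icc hst)]
  simp

theorem integral_exp_neg_integral_le (ha : 0 < a) (hst : s ≤ t) (hA : ContinuousOn A (Icc s t))
    (hlb : ∀ τ ∈ Icc s t, a ≤ A τ) :
    ∫ η in s..t, exp (-∫ τ in η..t, A τ) ≤ 1 / a :=
  (integral_mono_on hst ((continuousOn_exp_neg_integral hst hA).intervalIntegrable_of_Icc hst)
    ((by fun_prop : Continuous fun η => exp (-(a * (t - η)))).intervalIntegrable _ _)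
    fun _ hη => exp_neg_integral_le hA hlb hη).trans (integral_exp_neg_mul_sub_le ha s t)

theorem integral_exp_neg_integral_mul_le {M : ℝ} (ha : 0 < a) (hM : 0 ≤ M) (hst : s ≤ t)
    (hA : ContinuousOn A (Icc s t)) (hlb : ∀ τ ∈ Icc s t, a ≤ A τ)
    (hLip : ∀ η ∈ Icc s t, |A t - A η| ≤ M * (t - η)) :
    (∫ η in s..t, exp (-∫ τ in η..t, A τ)) * A t ≤ 1 + M / a ^ 2 := by
  set F := fun η => exp (-∫ τ in η..t, A τ)
  have hF : ContinuousOn F (Icc s t) := continuousOn_exp_neg_integral hst hA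
  have hsplit : (∫ η in s..t, F η) * A t
      = (∫ η in s..t, F η * (A t - A η)) + ∫ η in s..t, F η * A η := by
    rw [← intervalIntegral.integral_mul_const, ← intervalIntegral.integral_add]
    · simp only [mul_sub, sub_add_cancel]
    · exact (hF.mul (continuousOn_const.sub hA)).intervalIntegrable_of_Icc hst
    · exact (hF.mul hA).intervalIntegrable_of_Icc hst
  have hdefect : ∫ η in s..t, F η * (A t - A η) ≤ M / a ^ 2 := calc
    _ ≤ ∫ η in s..t, M * ((t - η) * exp (-(a * (t - η)))) := by
      refine integral_mono_on hst
        ((hF.mul (continuousOn_const.sub hA)).intervalIntegrable_of_Icc hst)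
        ((by fun_prop : Continuous _).intervalIntegrable _ _) fun η hη => ?_
      calc F η * (A t - A η) ≤ F η * (M * (t - η)) :=
            mul_le_mul_of_nonneg_left ((le_abs_self _).trans (hLip η hη)) (exp_pos _).le
        _ ≤ exp (-(a * (t - η))) * (M * (t - η)) :=
            mul_le_mul_of_nonneg_right (exp_neg_integral_le hA hlb hη)
              ((abs_nonneg _).trans (hLip η hη))
        _ = M * ((t - η) * exp (-(a * (t - η)))) := by ring
    _ = M * ∫ η in s..t, (t - η) * exp (-(a * (t - η))) := intervalIntegral.integral_const_mul M _
    _ ≤ M * (1 / a ^ 2) := by gcongr; exact integral_sub_mul_exp_neg_mul_sub_le ha hst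
    _ = M / a ^ 2 := by ring
  have hflux : ∫ η in s..t, F η * A η ≤ 1 := by
    rw [integral_exp_neg_integral_mul hst hA]
    linarith [exp_pos (-∫ τ in s..t, A τ)]
  linarith

end Propagator

theorem transition_integral_bounds_general (a M : ℝ) (ha : 0 < a)
    (A A' : ℝ → ℝ)
    (hderiv : ∀ t ≥ (0 : ℝ), HasDerivAt A (A' t) t)
    (hlb : ∀ t ≥ (0 : ℝ), a ≤ A t)
    (hub : ∀ t ≥ (0 : ℝ), |A' t| ≤ M) :
    ∀ t ≥ (0 : ℝ),
      0 ≤ (∫ η in (0 : ℝ)..t, Real.exp (-(∫ τ in η..t, A τ))) ∧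
      (∫ η in (0 : ℝ)..t, Real.exp (-(∫ τ in η..t, A τ))) ≤ 1 / a ∧
      (∫ η in (0 : ℝ)..t, Real.exp (-(∫ τ in η..t, A τ))) * A t
        ≤ 2 + M / a ^ 2 := by
  intro t ht
  have hA : ContinuousOn A (Icc 0 t) := fun x hx =>
    (hderiv x hx.1).continuousAt.continuousWithinAt
  have hlb' : ∀ τ ∈ Icc 0 t, a ≤ A τ := fun τ hτ => hlb τ hτ.1
  have hLip : ∀ η ∈ Icc 0 t, |A t - A η| ≤ M * (t - η) := by
    intro η hη
    have := (convex_Icc 0 t).norm_image_sub_le_of_norm_hasDerivWithin_le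
      (fun x hx => (hderiv x hx.1).hasDerivWithinAt) (fun x hx => hub x hx.1) hη
      (right_mem_Icc.2 ht)
    rwa [Real.norm_eq_abs, Real.norm_eq_abs, abs_of_nonneg (sub_nonneg.2 hη.2)] at this
  have hM : 0 ≤ M := (abs_nonneg _).trans (hub 0 le_rfl)
  refine ⟨integral_nonneg ht fun η _ => (exp_pos _).le,
    integral_exp_neg_integral_le ha ht hA hlb', ?_⟩
  linarith [integral_exp_neg_integral_mul_le ha hM ht hA hlb' hLip, div_nonneg hM (sq_nonneg a)]

/-- Uniform bounds on `f(t) = ∫₀ᵗ exp(−∫_η^t A(τ) dτ) dη` and on `f(t)A(t)`: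
if `A ≥ a > 0` and `|A'| ≤ M` on `[0,∞)`, then `0 ≤ f(t) ≤ 1/a` and
`f(t)A(t) ≤ 2 + M/a²`. -/
theorem transition_integral_bounds (a M : ℝ) (ha : 0 < a) (hM : 0 < M)
    (A A' : ℝ → ℝ)
    (hderiv : ∀ t ≥ (0 : ℝ), HasDerivAt A (A' t) t)
    (hlb : ∀ t ≥ (0 : ℝ), a ≤ A t)
    (hub : ∀ t ≥ (0 : ℝ), |A' t| ≤ M) :
    ∀ t ≥ (0 : ℝ),
      0 ≤ (∫ η in (0 : ℝ)..t, Real.exp (-(∫ τ in η..t, A τ))) ∧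
      (∫ η in (0 : ℝ)..t, Real.exp (-(∫ τ in η..t, A τ))) ≤ 1 / a ∧
      (∫ η in (0 : ℝ)..t, Real.exp (-(∫ τ in η..t, A τ))) * A t
        ≤ 2 + M / a ^ 2 :=
  transition_integral_bounds_general a M ha A A' hderiv hlb hub
end

section
/- Let k, a > 0, β ≥ 0, c ≥ 0, and let π', π'' : [0,∞) → ℝ be continuous nonnegative functions with sup_{τ≥0} e^{-kτ}|π'(τ) − π''(τ)| ≤ c. Then for all t ≥ 0, | exp(−∫₀ᵗ (a + β π'(τ)) dτ) − exp(−∫₀ᵗ (a + β π''(τ)) dτ) | ≤ e^{-at} · β c (e^{kt} − 1)/k. -/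
lemma abs_exp_neg_sub_exp_neg (x y m : ℝ) (hx : m ≤ x) (hy : m ≤ y) :
    |Real.exp (-x) - Real.exp (-y)| ≤ Real.exp (-m) * |x - y| := by
  wlog h : x ≤ y generalizing x y
  · rw [abs_sub_comm, abs_sub_comm x y]
    exact this y x hy hx (le_of_not_ge h)
  have key : Real.exp (-x) - Real.exp (-y) = Real.exp (-x) * (1 - Real.exp (-(y - x))) := by
    rw [mul_sub, mul_one, ← Real.exp_add]; ring_nf
  rw [key, abs_of_nonneg, abs_of_nonpos (by linarith)]
  · apply mul_le_mul (Real.exp_le_exp.2 (by linarith)) _ _ (Real.exp_nonneg _)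
    · have := Real.add_one_le_exp (-(y - x))
      linarith
    · have := Real.exp_le_one_iff.2 (by linarith : -(y - x) ≤ 0)
      linarith
  · have h1 : Real.exp (-(y - x)) ≤ 1 := Real.exp_le_one_iff.2 (by linarith)
    exact mul_nonneg (Real.exp_nonneg _) (by linarith)

/-- Weighted-norm estimate on the difference of state transition functions:
if `sup_{τ≥0} e^{-kτ}|π'(τ) − π''(τ)| ≤ c`, then for all `t ≥ 0`,
`|exp(−∫₀ᵗ(a + βπ')) − exp(−∫₀ᵗ(a + βπ''))| ≤ e^{-at} β c (e^{kt} − 1)/k`. -/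
theorem transition_function_difference_bound (k a β c : ℝ)
    (hk : 0 < k) (ha : 0 < a) (hβ : 0 ≤ β) (hc : 0 ≤ c)
    (π' π'' : ℝ → ℝ)
    (hπ'c : ContinuousOn π' (Set.Ici 0))
    (hπ''c : ContinuousOn π'' (Set.Ici 0))
    (hπ'nn : ∀ τ ≥ (0 : ℝ), 0 ≤ π' τ)
    (hπ''nn : ∀ τ ≥ (0 : ℝ), 0 ≤ π'' τ)
    (hd : ∀ τ ≥ (0 : ℝ), Real.exp (-k * τ) * |π' τ - π'' τ| ≤ c) :
    ∀ t ≥ (0 : ℝ),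
      |Real.exp (-(∫ τ in (0 : ℝ)..t, (a + β * π' τ))) -
        Real.exp (-(∫ τ in (0 : ℝ)..t, (a + β * π'' τ)))|
      ≤ Real.exp (-a * t) * (β * c * (Real.exp (k * t) - 1) / k) := by
  intro t ht
  have huIcc : Set.uIcc (0:ℝ) t ⊆ Set.Ici 0 := by
    rw [Set.uIcc_of_le ht]
    exact fun x hx => hx.1
  have hi1 : IntervalIntegrable (fun τ => a + β * π' τ) MeasureTheory.volume 0 t := by
    apply ContinuousOn.intervalIntegrable
    exact (continuousOn_const.add (continuousOn_const.mul (hπ'c.mono huIcc)))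
  have hi2 : IntervalIntegrable (fun τ => a + β * π'' τ) MeasureTheory.volume 0 t := by
    apply ContinuousOn.intervalIntegrable
    exact (continuousOn_const.add (continuousOn_const.mul (hπ''c.mono huIcc)))
  set x := ∫ τ in (0:ℝ)..t, (a + β * π' τ)
  set y := ∫ τ in (0:ℝ)..t, (a + β * π'' τ)
  -- lower bounds x, y ≥ a * t
  have hat : a * t = ∫ τ in (0:ℝ)..t, a := by
    simp [mul_comm]
  have hx : a * t ≤ x := by
    rw [hat]
    apply intervalIntegral.integral_mono_on ht intervalIntegrable_const hi1
    intro u hu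
    have := hπ'nn u hu.1
    nlinarith
  have hy : a * t ≤ y := by
    rw [hat]
    apply intervalIntegral.integral_mono_on ht intervalIntegrable_const hi2
    intro u hu
    have := hπ''nn u hu.1
    nlinarith
  -- bound |x - y|
  have hdiff : x - y = β * ∫ τ in (0:ℝ)..t, (π' τ - π'' τ) := by
    rw [← intervalIntegral.integral_const_mul]
    rw [← intervalIntegral.integral_sub hi1 hi2]
    congr 1; ext τ; ring
  have hπi : IntervalIntegrable (fun τ => π' τ - π'' τ) MeasureTheory.volume 0 t :=
    ContinuousOn.intervalIntegrable ((hπ'c.mono huIcc).sub (hπ''c.mono huIcc))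
  have hexpint : ∀ s : ℝ, ∫ τ in (0:ℝ)..s, Real.exp (k * τ)
      = (Real.exp (k * s) - 1) / k := by
    intro s
    have := intervalIntegral.integral_comp_mul_left (fun u => Real.exp u) (c := k) hk.ne'
      (a := 0) (b := s)
    simp only [mul_zero] at this
    rw [this, integral_exp]
    simp [Real.exp_zero, smul_eq_mul, div_eq_inv_mul]
  have hbound : |x - y| ≤ β * c * (Real.exp (k * t) - 1) / k := by
    rw [hdiff, abs_mul, abs_of_nonneg hβ]
    have hce : IntervalIntegrable (fun τ => c * Real.exp (k * τ)) MeasureTheory.volume 0 t :=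
      ContinuousOn.intervalIntegrable
        (continuousOn_const.mul (Real.continuous_exp.comp (continuous_const.mul continuous_id)).continuousOn)
    have h1 : |∫ τ in (0:ℝ)..t, (π' τ - π'' τ)| ≤ ∫ τ in (0:ℝ)..t, c * Real.exp (k * τ) := by
      calc |∫ τ in (0:ℝ)..t, (π' τ - π'' τ)| ≤ ∫ τ in (0:ℝ)..t, |π' τ - π'' τ| :=
            intervalIntegral.abs_integral_le_integral_abs ht
        _ ≤ ∫ τ in (0:ℝ)..t, c * Real.exp (k * τ) := by
            apply intervalIntegral.integral_mono_on ht hπi.abs hce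
            intro u hu
            have := hd u hu.1
            have h2 : Real.exp (-k * u) * Real.exp (k * u) = 1 := by
              rw [← Real.exp_add]; ring_nf; exact Real.exp_zero
            nlinarith [abs_nonneg (π' u - π'' u), Real.exp_pos (k * u), Real.exp_pos (-k * u)]
    calc β * |∫ τ in (0:ℝ)..t, (π' τ - π'' τ)|
        ≤ β * ∫ τ in (0:ℝ)..t, c * Real.exp (k * τ) := by
          exact mul_le_mul_of_nonneg_left h1 hβ
      _ = β * c * (Real.exp (k * t) - 1) / k := by
          rw [intervalIntegral.integral_const_mul, hexpint t]; ring
  calc |Real.exp (-x) - Real.exp (-y)|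
      ≤ Real.exp (-(a * t)) * |x - y| := abs_exp_neg_sub_exp_neg x y (a * t) hx hy
    _ ≤ Real.exp (-a * t) * (β * c * (Real.exp (k * t) - 1) / k) := by
        rw [neg_mul]
        exact mul_le_mul_of_nonneg_left hbound (Real.exp_nonneg _)
end
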